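/- arXiv:2107.14218 — 12 statements merged into one kernel-verified Lean document; each statement's English description precedes it below -/
import Mathlib

section
/- Let λ > 0 and λ_e > 0 be real numbers and set ρ = λ_e/λ. For each positive integer n, the binary freshness of a node in a disconnected n-node gossip network is F(n) = 1/(1 + nρ). Then F(n) tends to 0 as n → ∞, and n·F(n) tends to 1/ρ as n → ∞; i.e., the freshness decreases to 0 at rate (1/ρ)·n^{-1}. -/
open Filter Topology

/- For `n ≠ 0`, `n / (1 + n ρ) = (n⁻¹ + ρ)⁻¹`, whose limit is `ρ⁻¹`; dividing once more by `n`
shows that `(1 + n ρ)⁻¹` itself tends to `0`. -/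

theorem tendsto_natCast_div_one_add_natCast_mul {ρ : ℝ} (hρ : ρ ≠ 0) :
    Tendsto (fun n : ℕ => (n : ℝ) / (1 + n * ρ)) atTop (𝓝 ρ⁻¹) := by
  have hlim : Tendsto (fun n : ℕ => ((n : ℝ)⁻¹ + ρ)⁻¹) atTop (𝓝 ρ⁻¹) := by
    simpa using (tendsto_inv_atTop_nhds_zero_nat.add_const ρ).inv₀ (by simpa using hρ)
  refine hlim.congr' ?_
  filter_upwards [eventually_ne_atTop 0] with n hn
  have hn' : (n : ℝ) ≠ 0 := Nat.cast_ne_zero.mpr hn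
  rw [show (n : ℝ)⁻¹ + ρ = (1 + n * ρ) / n by field_simp, inv_div]

theorem tendsto_inv_one_add_natCast_mul {ρ : ℝ} (hρ : ρ ≠ 0) :
    Tendsto (fun n : ℕ => (1 + n * ρ)⁻¹) atTop (𝓝 0) := by
  have hlim := (tendsto_natCast_div_one_add_natCast_mul hρ).mul tendsto_inv_atTop_nhds_zero_nat
  rw [mul_zero] at hlim
  refine hlim.congr' ?_
  filter_upwards [eventually_ne_atTop 0] with n hn
  have hn' : (n : ℝ) ≠ 0 := Nat.cast_ne_zero.mpr hn
  rw [div_mul_eq_mul_div, mul_inv_cancel₀ hn', one_div]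

/-- In a disconnected n-node gossip network (source self-update rate `lam_e`,
source-to-node rate `lam/n`), the single-node binary freshness
`F n = 1/(1 + n*ρ)` with `ρ = lam_e/lam` tends to 0, and `n * F n → 1/ρ`;
i.e., the freshness decreases to 0 at rate `(1/ρ) * n⁻¹`. -/
theorem disconnected_freshness_scaling
    (lam lam_e : ℝ) (hlam : 0 < lam) (hlam_e : 0 < lam_e)
    (ρ : ℝ) (hρ : ρ = lam_e / lam)
    (F : ℕ → ℝ) (hF : ∀ n : ℕ, 0 < n → F n = 1 / (1 + (n : ℝ) * ρ)) :
    Filter.Tendsto F Filter.atTop (nhds 0) ∧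
    Filter.Tendsto (fun n : ℕ => (n : ℝ) * F n) Filter.atTop (nhds (1 / ρ)) := by
  have hρ_ne : ρ ≠ 0 := (hρ ▸ div_pos hlam_e hlam).ne'
  have hF_eventually : ∀ᶠ n : ℕ in atTop, (1 + (n : ℝ) * ρ)⁻¹ = F n := by
    filter_upwards [eventually_gt_atTop 0] with n hn
    rw [hF n hn, one_div]
  refine ⟨(tendsto_inv_one_add_natCast_mul hρ_ne).congr' hF_eventually, ?_⟩
  rw [one_div]
  refine (tendsto_natCast_div_one_add_natCast_mul hρ_ne).congr' ?_
  filter_upwards [hF_eventually] with n hn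
  rw [← hn, div_eq_mul_inv]
end

section
/- Fix a real ρ > 0 and an integer n ≥ 2. Define the ring freshness values by the backward recursion F(n) = 1/(1+ρ) and F(j) = (j/n + F(j+1)) / (1 + ρ + j/n) for j = 1, …, n−1, and define a_i = (i/n)·∏_{j=1}^{i} 1/(1 + ρ + j/n) for 1 ≤ i ≤ n−1. Then F(1) = ∑_{i=1}^{n−1} a_i + (n/(n−1))·a_{n−1}·F(n). -/
/-! Unrolling the first-order linear recursion `F j = c j * (b j + F (j + 1))` from `j = 1` to
`n - 1` gives `F 1 = ∑ b i * ∏_{j ≤ i} c j + (∏_{j ≤ n-1} c j) * F n`; with `b i = i/n` and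
`c j = 1/(1+ρ+j/n)` the summands are the `a i`, and the full product is `(n/(n-1)) * a (n-1)`. -/

open Finset

theorem eq_sum_mul_prod_add_prod_mul_of_recurrence {R : Type*} [CommSemiring R]
    (F b c : ℕ → R) {k m : ℕ} (hkm : k ≤ m)
    (hF : ∀ j, k ≤ j → j ≤ m → F j = c j * (b j + F (j + 1))) :
    F k = ∑ i ∈ Icc k m, b i * ∏ j ∈ Icc k i, c j + (∏ j ∈ Icc k m, c j) * F (m + 1) := by
  induction m, hkm using Nat.le_induction with
  | base => simp only [Icc_self, sum_singleton, prod_singleton, hF k le_rfl le_rfl]; ring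
  | succ m hkm ih =>
    rw [ih fun j hkj hjm => hF j hkj (by omega), sum_Icc_succ_top (by omega),
      prod_Icc_succ_top (by omega), hF (m + 1) (by omega) le_rfl]
    ring

open Finset in
theorem ring_freshness_explicit_solution_general
    (ρ : ℝ) (n : ℕ) (hn : 2 ≤ n)
    (F : ℕ → ℝ)
    (hFrec : ∀ j : ℕ, 1 ≤ j → j ≤ n - 1 →
      F j = ((j : ℝ) / n + F (j + 1)) / (1 + ρ + (j : ℝ) / n))
    (a : ℕ → ℝ)
    (ha : ∀ i : ℕ, 1 ≤ i → i ≤ n - 1 →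
      a i = ((i : ℝ) / n) * ∏ j ∈ Icc 1 i, 1 / (1 + ρ + (j : ℝ) / n)) :
    F 1 = (∑ i ∈ Icc 1 (n - 1), a i) + ((n : ℝ) / ((n : ℝ) - 1)) * a (n - 1) * F n := by
  have hunrolled := eq_sum_mul_prod_add_prod_mul_of_recurrence F (fun j : ℕ => (j : ℝ) / n)
    (fun j : ℕ => 1 / (1 + ρ + (j : ℝ) / n)) (by omega : 1 ≤ n - 1)
    fun j hj1 hjn => by rw [hFrec j hj1 hjn, one_div_mul_eq_div]
  have hsum : ∑ i ∈ Icc 1 (n - 1), a i =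
      ∑ i ∈ Icc 1 (n - 1), (i : ℝ) / n * ∏ j ∈ Icc 1 i, 1 / (1 + ρ + (j : ℝ) / n) :=
    sum_congr rfl fun i hi => by rw [mem_Icc] at hi; exact ha i hi.1 hi.2
  have hlast : (n : ℝ) / ((n : ℝ) - 1) * a (n - 1) =
      ∏ j ∈ Icc 1 (n - 1), 1 / (1 + ρ + (j : ℝ) / n) := by
    have hn' : (2 : ℝ) ≤ n := by exact_mod_cast hn
    have hne : (n : ℝ) - 1 ≠ 0 := by linarith
    rw [ha (n - 1) (by omega) le_rfl, Nat.cast_sub (by omega), Nat.cast_one]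
    field_simp
  rw [hunrolled, Nat.sub_add_cancel (by omega), hsum, hlast]

open Finset in
/-- Explicit solution of the ring-network freshness recursion:
with `F n = 1/(1+ρ)` and `F j = (j/n + F (j+1)) / (1 + ρ + j/n)` for
`1 ≤ j ≤ n-1`, and `a i = (i/n) ∏_{j=1}^{i} 1/(1+ρ+j/n)`, one has
`F 1 = ∑_{i=1}^{n-1} a i + (n/(n-1)) * a (n-1) * F n`. -/
theorem ring_freshness_explicit_solution
    (ρ : ℝ) (hρ : 0 < ρ) (n : ℕ) (hn : 2 ≤ n)
    (F : ℕ → ℝ)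
    (hFn : F n = 1 / (1 + ρ))
    (hFrec : ∀ j : ℕ, 1 ≤ j → j ≤ n - 1 →
      F j = ((j : ℝ) / n + F (j + 1)) / (1 + ρ + (j : ℝ) / n))
    (a : ℕ → ℝ)
    (ha : ∀ i : ℕ, 1 ≤ i → i ≤ n - 1 →
      a i = ((i : ℝ) / n) * ∏ j ∈ Icc 1 i, 1 / (1 + ρ + (j : ℝ) / n)) :
    F 1 = (∑ i ∈ Icc 1 (n - 1), a i) + ((n : ℝ) / ((n : ℝ) - 1)) * a (n - 1) * F n :=
  ring_freshness_explicit_solution_general ρ n hn F hFrec a ha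
end

section
/- Fix a real ρ > 0. For each integer n ≥ 2, let F_n(1) denote the binary freshness of a single node in the n-node ring network, defined through the backward recursion F_n(n) = 1/(1+ρ) and F_n(j) = (j/n + F_n(j+1)) / (1 + ρ + j/n) for j = 1, …, n−1. Then lim_{n→∞} n·F_n(1) = 1/ρ + 1/ρ²; i.e., in a ring network the average freshness of a single node decreases to 0 as (1/ρ + 1/ρ²)·n^{-1}. -/
/-!
Unrolling the recursion gives
`n F_n(1) = ∑_{k<n} k / ∏_{i=1}^{k} (1 + ρ + i/n) + n / ((1 + ρ) ∏_{i=1}^{n-1} (1 + ρ + i/n))`.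
Each product is at least `(1 + ρ)^k` and tends to `(1 + ρ)^k` as `n → ∞`, so by Tannery's theorem
the sum tends to `∑ k (1 + ρ)^(-k) = (1 + ρ)/ρ² = 1/ρ + 1/ρ²`, while the last term is at most
`n (1 + ρ)^(-n) → 0`.
-/

open Finset Filter Topology

theorem eq_sum_div_prod_of_backward_rec {K : Type*} [Semifield K] {a b f : ℕ → K} {m n : ℕ}
    (hmn : m ≤ n) (hf : ∀ j, m ≤ j → j < n → f j = (b j + f (j + 1)) / a j) :
    f m = ∑ k ∈ Ico m n, b k / ∏ i ∈ Ico m (k + 1), a i + f n / ∏ i ∈ Ico m n, a i := by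
  induction n, hmn using Nat.le_induction with
  | base => simp
  | succ n hmn ih =>
    rw [ih fun j hmj hjn => hf j hmj (by omega), sum_Ico_succ_top hmn, prod_Ico_succ_top hmn,
      hf n hmn n.lt_succ_self, add_assoc, add_div, add_div, div_div, div_div, mul_comm (a n)]

namespace RingFreshness

variable {ρ : ℝ}

noncomputable def freshnessTerm (ρ : ℝ) (n k : ℕ) : ℝ :=
  k / ∏ i ∈ Ico 1 (k + 1), (1 + ρ + i / n)

lemma one_add_pow_card_le_prod (hρ : 0 ≤ 1 + ρ) (n : ℕ) (s : Finset ℕ) :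
    (1 + ρ) ^ #s ≤ ∏ i ∈ s, (1 + ρ + i / n) := by
  rw [← prod_const]
  exact prod_le_prod (fun _ _ => hρ) fun i _ => le_add_of_nonneg_right (by positivity)

lemma mul_eq_sum_freshnessTerm_add {F : ℕ → ℝ} {n : ℕ} (hn : 1 ≤ n) (hFn : F n = 1 / (1 + ρ))
    (hFrec : ∀ j : ℕ, 1 ≤ j → j ≤ n - 1 →
      F j = ((j : ℝ) / n + F (j + 1)) / (1 + ρ + (j : ℝ) / n)) :
    n * F 1 =
      ∑ k ∈ range n, freshnessTerm ρ n k + n / (1 + ρ) / ∏ i ∈ Ico 1 n, (1 + ρ + i / n) := by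
  have hn0 : (n : ℝ) ≠ 0 := Nat.cast_ne_zero.mpr (by omega)
  rw [eq_sum_div_prod_of_backward_rec hn fun j hj hjn => hFrec j hj (by omega), hFn, mul_add,
    mul_sum, range_eq_Ico, sum_eq_sum_Ico_succ_bot (by omega : 0 < n)]
  simp only [freshnessTerm, Nat.cast_zero, zero_div, zero_add]
  congr 1
  · refine sum_congr rfl fun k _ => ?_
    rw [mul_div_assoc', mul_div_assoc', mul_div_cancel_left₀ _ hn0]
  · rw [mul_div_assoc', mul_div_assoc', mul_one]

lemma tendsto_freshnessTerm (hρ : 1 + ρ ≠ 0) (k : ℕ) :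
    Tendsto (fun n => freshnessTerm ρ n k) atTop (𝓝 (k * (1 + ρ)⁻¹ ^ k)) := by
  have hprod := tendsto_finsetProd (Ico 1 (k + 1)) (a := fun _ => 1 + ρ) fun i _ => by
    simpa using tendsto_const_nhds.add (tendsto_const_div_atTop_nhds_zero_nat (i : ℝ))
  rw [prod_const, Nat.card_Ico, Nat.add_sub_cancel] at hprod
  rw [inv_pow, ← div_eq_mul_inv]
  exact tendsto_const_nhds.div hprod (pow_ne_zero k hρ)

lemma norm_freshnessTerm_le (hρ : 0 < 1 + ρ) (n k : ℕ) :
    ‖freshnessTerm ρ n k‖ ≤ k * (1 + ρ)⁻¹ ^ k := by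
  have hprod := one_add_pow_card_le_prod hρ.le n (Ico 1 (k + 1))
  rw [Nat.card_Ico, Nat.add_sub_cancel] at hprod
  rw [freshnessTerm, Real.norm_of_nonneg (div_nonneg k.cast_nonneg (by positivity)), inv_pow,
    ← div_eq_mul_inv]
  exact div_le_div_of_nonneg_left k.cast_nonneg (by positivity) hprod

lemma norm_inv_one_add_lt_one (hρ : 0 < ρ) : ‖(1 + ρ)⁻¹‖ < 1 := by
  rw [Real.norm_of_nonneg (by positivity)]
  exact inv_lt_one_of_one_lt₀ (by linarith)

lemma tsum_coe_mul_inv_one_add_pow (hρ : 0 < ρ) :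
    ∑' k : ℕ, k * (1 + ρ)⁻¹ ^ k = 1 / ρ + 1 / ρ ^ 2 := by
  have h : 1 - (1 + ρ)⁻¹ = ρ / (1 + ρ) := by field_simp; ring
  rw [tsum_coe_mul_geometric_of_norm_lt_one (norm_inv_one_add_lt_one hρ), h]
  field_simp
  ring

lemma tendsto_sum_range_freshnessTerm (hρ : 0 < ρ) :
    Tendsto (fun n => ∑ k ∈ range n, freshnessTerm ρ n k) atTop (𝓝 (1 / ρ + 1 / ρ ^ 2)) := by
  have hsum : ∀ n, ∑ k ∈ range n, freshnessTerm ρ n k =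
      ∑' k, if k < n then freshnessTerm ρ n k else 0 := by
    intro n
    rw [tsum_eq_sum (s := range n) fun k hk => if_neg (by simpa using hk)]
    exact sum_congr rfl fun k hk => (if_pos (mem_range.mp hk)).symm
  simp_rw [hsum, ← tsum_coe_mul_inv_one_add_pow hρ]
  refine tendsto_tsum_of_dominated_convergence (bound := fun k : ℕ => k * (1 + ρ)⁻¹ ^ k)
    (by simpa using summable_pow_mul_geometric_of_norm_lt_one 1 (norm_inv_one_add_lt_one hρ))
    (fun k => ?_) (Eventually.of_forall fun n k => ?_)
  · exact (tendsto_freshnessTerm (by positivity) k).congr' <|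
      (eventually_gt_atTop k).mono fun n hkn => (if_pos hkn).symm
  · split_ifs
    · exact norm_freshnessTerm_le (by positivity) n k
    · rw [norm_zero]; positivity

lemma tendsto_last_summand (hρ : 0 < ρ) :
    Tendsto (fun n : ℕ => n / (1 + ρ) / ∏ i ∈ Ico 1 n, (1 + ρ + i / n)) atTop (𝓝 0) := by
  refine squeeze_zero (fun n => by positivity) (fun n => ?_)
    (tendsto_self_mul_const_pow_of_abs_lt_one (norm_inv_one_add_lt_one hρ))
  have hprod := one_add_pow_card_le_prod (by positivity) n (Ico 1 n)
  rw [Nat.card_Ico] at hprod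
  calc (n : ℝ) / (1 + ρ) / ∏ i ∈ Ico 1 n, (1 + ρ + i / n)
      ≤ n / (1 + ρ) / (1 + ρ) ^ (n - 1) :=
        div_le_div_of_nonneg_left (by positivity) (by positivity) hprod
    _ = n * (1 + ρ)⁻¹ ^ n := by
        rcases n with _ | n
        · simp
        · rw [Nat.add_sub_cancel, div_div, ← pow_succ', inv_pow, div_eq_mul_inv]

end RingFreshness

/-- In a ring network the average freshness of a single node decreases to 0 as
`(1/ρ + 1/ρ²) * n⁻¹`: if for every `n ≥ 2` the values `F n j` satisfy the ring
recursion `F n n = 1/(1+ρ)` and `F n j = (j/n + F n (j+1))/(1+ρ+j/n)` for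
`1 ≤ j ≤ n-1`, then `n * F n 1 → 1/ρ + 1/ρ²`. -/
theorem ring_freshness_scaling
    (ρ : ℝ) (hρ : 0 < ρ)
    (F : ℕ → ℕ → ℝ)
    (hFn : ∀ n : ℕ, 2 ≤ n → F n n = 1 / (1 + ρ))
    (hFrec : ∀ n : ℕ, 2 ≤ n → ∀ j : ℕ, 1 ≤ j → j ≤ n - 1 →
      F n j = ((j : ℝ) / n + F n (j + 1)) / (1 + ρ + (j : ℝ) / n)) :
    Filter.Tendsto (fun n : ℕ => (n : ℝ) * F n 1) Filter.atTop
      (nhds (1 / ρ + 1 / ρ ^ 2)) := by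
  have hlim := (RingFreshness.tendsto_sum_range_freshnessTerm hρ).add
    (RingFreshness.tendsto_last_summand hρ)
  rw [add_zero] at hlim
  refine hlim.congr' ?_
  filter_upwards [eventually_ge_atTop 2] with n hn
  exact (RingFreshness.mul_eq_sum_freshnessTerm_add (by omega) (hFn n hn) (hFrec n hn)).symm
end

section
/- Fix a real ρ > 0 and an integer n ≥ 2. Define the ring freshness values by F(n) = 1/(1+ρ) and F(j) = (j/n + F(j+1)) / (1 + ρ + j/n) for j = 1, …, n−1. Then F(j) > j/(j + nρ) for every j = 1, …, n−1; in particular the single-node freshness in the ring network is strictly larger than the single-node freshness 1/(1 + nρ) of the disconnected network: F(1) > 1/(1 + nρ). -/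
/-- For the ring-network freshness recursion `F n = 1/(1+ρ)`,
`F j = (j/n + F (j+1))/(1+ρ+j/n)`, one has `F j > j/(j + nρ)` for
`1 ≤ j ≤ n-1`; in particular the single-node ring freshness strictly exceeds
the disconnected-network freshness: `F 1 > 1/(1 + nρ)`. -/
theorem ring_freshness_beats_disconnected
    (ρ : ℝ) (hρ : 0 < ρ) (n : ℕ) (hn : 2 ≤ n)
    (F : ℕ → ℝ)
    (hFn : F n = 1 / (1 + ρ))
    (hFrec : ∀ j : ℕ, 1 ≤ j → j ≤ n - 1 →
      F j = ((j : ℝ) / n + F (j + 1)) / (1 + ρ + (j : ℝ) / n)) :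
    (∀ j : ℕ, 1 ≤ j → j ≤ n - 1 → F j > (j : ℝ) / ((j : ℝ) + (n : ℝ) * ρ)) ∧
    F 1 > 1 / (1 + (n : ℝ) * ρ) := by
  have hn2 : (2:ℝ) ≤ (n:ℝ) := by exact_mod_cast hn
  have hn0 : (0:ℝ) < (n:ℝ) := by linarith
  have mono : ∀ a b : ℝ, 0 ≤ a → a < b → a/(a+(n:ℝ)*ρ) < b/(b+(n:ℝ)*ρ) := by
    intro a b ha hab
    have h1 : 0 < a + (n:ℝ)*ρ := by nlinarith
    have h2 : 0 < b + (n:ℝ)*ρ := by nlinarith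
    rw [div_lt_div_iff₀ h1 h2]
    nlinarith [mul_lt_mul_of_pos_right hab (mul_pos hn0 hρ)]
  have step : ∀ j : ℕ, 1 ≤ j → j ≤ n - 1 →
      F (j+1) > (j:ℝ)/((j:ℝ)+(n:ℝ)*ρ) → F j > (j:ℝ)/((j:ℝ)+(n:ℝ)*ρ) := by
    intro j h1 h2 hgt
    have hj1 : (1:ℝ) ≤ (j:ℝ) := by exact_mod_cast h1
    have hden1 : (0:ℝ) < (j:ℝ) + (n:ℝ)*ρ := by nlinarith
    have hden2 : (0:ℝ) < 1 + ρ + (j:ℝ)/n := by positivity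
    rw [hFrec j h1 h2, gt_iff_lt, lt_div_iff₀ hden2]
    have key : (j:ℝ)/((j:ℝ)+(n:ℝ)*ρ) * (1+ρ+(j:ℝ)/n)
        = (j:ℝ)/n + (j:ℝ)/((j:ℝ)+(n:ℝ)*ρ) := by
      field_simp
      ring
    rw [key]
    linarith [hgt]
  have main : ∀ d : ℕ, ∀ j : ℕ, 1 ≤ j → j + d + 1 = n →
      F j > (j:ℝ)/((j:ℝ)+(n:ℝ)*ρ) := by
    intro d
    induction d with
    | zero =>
      intro j h1 hj
      apply step j h1 (by omega)
      have hFj : F (j+1) = 1/(1+ρ) := by rw [show j+1 = n by omega, hFn]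
      have heq : 1/(1+ρ) = (n:ℝ)/((n:ℝ)+(n:ℝ)*ρ) := by
        field_simp
      rw [hFj, heq]
      apply mono
      · positivity
      · exact_mod_cast (by omega : j < n)
    | succ d ih =>
      intro j h1 hj
      apply step j h1 (by omega)
      have h' := ih (j+1) (by omega) (by omega)
      refine lt_trans ?_ (by push_cast at h' ⊢; linarith [h'])
      have : ((j:ℝ)+1)/(((j:ℝ)+1)+(n:ℝ)*ρ) = ((j+1:ℕ):ℝ)/(((j+1:ℕ):ℝ)+(n:ℝ)*ρ) := by
        push_cast; ring_nf
      push_cast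
      apply mono
      · positivity
      · linarith
  constructor
  · intro j h1 h2
    exact main (n - 1 - j) j h1 (by omega)
  · have h := main (n-2) 1 le_rfl (by omega)
    simpa using h
end

section
/- Fix a real ρ > 0 and an integer n ≥ 2. Define the ring freshness values by F(n) = 1/(1+ρ) and F(j) = (j/n + F(j+1)) / (1 + ρ + j/n) for j = 1, …, n−1. Then F(1) ≤ (1+ρ)/(ρ²·n) + (1+ρ)^{-n}. -/
/-!
Write `x = (1 + ρ)⁻¹`. All `F j` are nonnegative, so dropping `j/n` from the denominator gives
`F j ≤ x (j/n + F (j+1))`, and the affine-plus-geometric envelope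
`B j = (j/ρ + 1/ρ²)/n + x^(n+1-j)` satisfies this recursion with equality: the coefficients
`1/ρ` and `1/ρ²` are the fixed point of `a ↦ x (1 + a)`, `b ↦ x (a + b)`.
Downward induction from `F n = x ≤ B n` then gives `F 1 ≤ B 1 = (1+ρ)/(ρ² n) + x^n`.
-/

noncomputable def ringFreshnessBound (ρ : ℝ) (n j : ℕ) : ℝ :=
  (j / ρ + 1 / ρ ^ 2) / n + (1 + ρ) ^ ((j : ℤ) - n - 1)

lemma ringFreshnessBound_succ {ρ : ℝ} (hρ : 0 < ρ) (n j : ℕ) :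
    ((j : ℝ) / n + ringFreshnessBound ρ n (j + 1)) / (1 + ρ) = ringFreshnessBound ρ n j := by
  have h1ρ : (1 + ρ) ≠ 0 := by positivity
  have hpow : (1 + ρ) ^ (((j + 1 : ℕ) : ℤ) - n - 1) = (1 + ρ) ^ ((j : ℤ) - n - 1) * (1 + ρ) := by
    rw [← zpow_add_one₀ h1ρ]; push_cast; ring_nf
  simp only [ringFreshnessBound, hpow]
  field_simp
  push_cast
  ring

lemma one_div_one_add_le_ringFreshnessBound {ρ : ℝ} (hρ : 0 < ρ) (n : ℕ) :
    1 / (1 + ρ) ≤ ringFreshnessBound ρ n n := by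
  have hpow : (1 + ρ) ^ ((n : ℤ) - n - 1) = 1 / (1 + ρ) := by simp
  rw [ringFreshnessBound, hpow]
  linarith [show 0 ≤ ((n : ℝ) / ρ + 1 / ρ ^ 2) / n by positivity]

section RingFreshness

variable {ρ : ℝ} {n : ℕ} {F : ℕ → ℝ}

lemma ring_freshness_nonneg (hρ : 0 < ρ) (hFn : F n = 1 / (1 + ρ))
    (hFrec : ∀ j : ℕ, 1 ≤ j → j ≤ n - 1 →
      F j = ((j : ℝ) / n + F (j + 1)) / (1 + ρ + (j : ℝ) / n))
    {j : ℕ} (hj : 1 ≤ j) (hjn : j ≤ n) : 0 ≤ F j := by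
  refine Nat.decreasingInduction' (P := fun k => 0 ≤ F k) (fun k hkn hjk ih => ?_) hjn ?_
  · rw [hFrec k (by omega) (by omega)]; positivity
  · rw [hFn]; positivity

lemma ring_freshness_le_div_one_add (hρ : 0 < ρ)
    (hFrec : ∀ j : ℕ, 1 ≤ j → j ≤ n - 1 →
      F j = ((j : ℝ) / n + F (j + 1)) / (1 + ρ + (j : ℝ) / n))
    {j : ℕ} (hj : 1 ≤ j) (hjn : j ≤ n - 1) (hF : 0 ≤ F (j + 1)) :
    F j ≤ ((j : ℝ) / n + F (j + 1)) / (1 + ρ) := by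
  rw [hFrec j hj hjn]
  exact div_le_div_of_nonneg_left (by positivity) (by positivity)
    (le_add_of_nonneg_right (by positivity))

lemma ring_freshness_le_bound (hρ : 0 < ρ) (hFn : F n = 1 / (1 + ρ))
    (hFrec : ∀ j : ℕ, 1 ≤ j → j ≤ n - 1 →
      F j = ((j : ℝ) / n + F (j + 1)) / (1 + ρ + (j : ℝ) / n))
    {j : ℕ} (hj : 1 ≤ j) (hjn : j ≤ n) : F j ≤ ringFreshnessBound ρ n j := by
  refine Nat.decreasingInduction' (P := fun k => F k ≤ ringFreshnessBound ρ n k)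
    (fun k hkn hjk ih => ?_) hjn ?_
  · calc F k ≤ ((k : ℝ) / n + F (k + 1)) / (1 + ρ) :=
          ring_freshness_le_div_one_add hρ hFrec (by omega) (by omega)
            (ring_freshness_nonneg hρ hFn hFrec (by omega) hkn)
      _ ≤ ((k : ℝ) / n + ringFreshnessBound ρ n (k + 1)) / (1 + ρ) := by gcongr
      _ = ringFreshnessBound ρ n k := ringFreshnessBound_succ hρ n k
  · rw [hFn]; exact one_div_one_add_le_ringFreshnessBound hρ n

end RingFreshness

/-- Upper bound on the single-node ring-network freshness: with
`F n = 1/(1+ρ)` and `F j = (j/n + F (j+1))/(1+ρ+j/n)` for `1 ≤ j ≤ n-1`,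
one has `F 1 ≤ (1+ρ)/(ρ² n) + (1+ρ)^{-n}`. -/
theorem ring_freshness_upper_bound
    (ρ : ℝ) (hρ : 0 < ρ) (n : ℕ) (hn : 2 ≤ n)
    (F : ℕ → ℝ)
    (hFn : F n = 1 / (1 + ρ))
    (hFrec : ∀ j : ℕ, 1 ≤ j → j ≤ n - 1 →
      F j = ((j : ℝ) / n + F (j + 1)) / (1 + ρ + (j : ℝ) / n)) :
    F 1 ≤ (1 + ρ) / (ρ ^ 2 * n) + (1 + ρ) ^ (-(n : ℤ)) := by
  have hbound : ringFreshnessBound ρ n 1 = (1 + ρ) / (ρ ^ 2 * n) + (1 + ρ) ^ (-(n : ℤ)) := by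
    rw [ringFreshnessBound, show ((1 : ℕ) : ℤ) - n - 1 = -n by push_cast; ring]
    field_simp
    ring
  exact hbound ▸ ring_freshness_le_bound hρ hFn hFrec le_rfl (by omega)
end

section
/- Fix a real ρ > 0 and an integer n ≥ 2. Define the fully connected freshness values by the backward recursion G(n) = 1/(1+ρ) and G(j) = (j/n + (j(n−j)/(n−1))·G(j+1)) / (ρ + j/n + j(n−j)/(n−1)) for j = 1, …, n−1, and define b_i = (1 + nρ/i + (n/(n−1))(n−i))^{-1} · ∏_{j=1}^{i−1} (1 + (n−1)ρ/((n−j)j) + ((n−1)/n)·1/(n−j))^{-1} for 1 ≤ i ≤ n−1. Then G(1) = ∑_{i=1}^{n−1} b_i + (n/(n−1))·b_{n−1}·G(n). -/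
/-!
Writing `D j = ρ + j/n + j(n-j)/(n-1)` for the total rate at level `j`, the recursion is affine,
`G j = (j/n)/D j + (j(n-j)/(n-1))/D j · G (j+1)`, so unrolling it from `j = 1` to `j = n-1` expresses
`G 1` as a sum of the source weights `(j/n)/D j` times partial products of the gossip weights
`(j(n-j)/(n-1))/D j`, plus the full product times `G n`. The bracketed factors in the definition of `b`
are exactly the reciprocals of these weights, and at `j = n-1` the gossip weight is `n/(n-1)` times the
source weight, which produces the coefficient of `G n`.
-/

open Finset

theorem eq_sum_prod_of_affine_recurrence {R : Type*} [CommSemiring R]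
    {a c G : ℕ → R} {m k : ℕ} (hmk : m ≤ k)
    (h : ∀ j ∈ Ico m k, G j = a j + c j * G (j + 1)) :
    G m = ∑ i ∈ Ico m k, (∏ j ∈ Ico m i, c j) * a i + (∏ j ∈ Ico m k, c j) * G k := by
  induction k, hmk using Nat.le_induction with
  | base => simp
  | succ k hmk ih =>
    rw [ih fun j hj => h j (Ico_subset_Ico_right k.le_succ hj), h k (by simp [hmk]),
      sum_Ico_succ_top hmk, prod_Ico_succ_top hmk]
    ring

namespace FullyConnected

variable (ρ : ℝ) (n : ℕ)

noncomputable def totalRate (j : ℕ) : ℝ :=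
  ρ + (j : ℝ) / n + (j : ℝ) * ((n : ℝ) - j) / ((n : ℝ) - 1)

noncomputable def sourceWeight (j : ℕ) : ℝ :=
  (j : ℝ) / n / totalRate ρ n j

noncomputable def gossipWeight (j : ℕ) : ℝ :=
  (j : ℝ) * ((n : ℝ) - j) / ((n : ℝ) - 1) / totalRate ρ n j

variable {ρ n}

theorem totalRate_pos (hρ : 0 ≤ ρ) {j : ℕ} (hj : 1 ≤ j) (hjn : j < n) :
    0 < totalRate ρ n j := by
  have hj' : (1 : ℝ) ≤ j := by exact_mod_cast hj
  have hjn' : (j : ℝ) + 1 ≤ n := by exact_mod_cast hjn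
  have : 0 ≤ (j : ℝ) * ((n : ℝ) - j) / ((n : ℝ) - 1) := by
    apply div_nonneg <;> nlinarith
  have : 0 < (j : ℝ) / n := by apply div_pos <;> linarith
  unfold totalRate
  linarith

theorem inv_sourceFactor_eq (hρ : 0 ≤ ρ) {i : ℕ} (hi : 1 ≤ i) (hin : i < n) :
    (1 + (n : ℝ) * ρ / i + ((n : ℝ) / ((n : ℝ) - 1)) * ((n : ℝ) - i))⁻¹ =
      sourceWeight ρ n i := by
  have hD := (totalRate_pos hρ hi hin).ne'
  have hi' : (1 : ℝ) ≤ i := by exact_mod_cast hi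
  have hin' : (i : ℝ) + 1 ≤ n := by exact_mod_cast hin
  have hn0 : (n : ℝ) ≠ 0 := by linarith
  have hn1 : (n : ℝ) - 1 ≠ 0 := by linarith
  have : 1 + (n : ℝ) * ρ / i + ((n : ℝ) / ((n : ℝ) - 1)) * ((n : ℝ) - i) =
      n / i * totalRate ρ n i := by
    unfold totalRate
    field_simp
    ring
  rw [this, sourceWeight]
  field_simp

theorem inv_gossipFactor_eq (hρ : 0 ≤ ρ) {j : ℕ} (hj : 1 ≤ j) (hjn : j < n) :
    (1 + ((n : ℝ) - 1) * ρ / (((n : ℝ) - j) * j) + (((n : ℝ) - 1) / n) * (1 / ((n : ℝ) - j)))⁻¹ =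
      gossipWeight ρ n j := by
  have hD := (totalRate_pos hρ hj hjn).ne'
  have hj' : (1 : ℝ) ≤ j := by exact_mod_cast hj
  have hjn' : (j : ℝ) + 1 ≤ n := by exact_mod_cast hjn
  have hn0 : (n : ℝ) ≠ 0 := by linarith
  have hn1 : (n : ℝ) - 1 ≠ 0 := by linarith
  have hnj : (n : ℝ) - j ≠ 0 := by linarith
  have : 1 + ((n : ℝ) - 1) * ρ / (((n : ℝ) - j) * j) + (((n : ℝ) - 1) / n) * (1 / ((n : ℝ) - j)) =
      ((n : ℝ) - 1) / (j * ((n : ℝ) - j)) * totalRate ρ n j := by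
    unfold totalRate
    field_simp
    ring
  rw [this, gossipWeight]
  field_simp

theorem gossipWeight_sub_one (hn : 2 ≤ n) :
    gossipWeight ρ n (n - 1) = (n : ℝ) / ((n : ℝ) - 1) * sourceWeight ρ n (n - 1) := by
  have hn' : (2 : ℝ) ≤ n := by exact_mod_cast hn
  have hn1 : (n : ℝ) - 1 ≠ 0 := by linarith
  have hn0 : (n : ℝ) ≠ 0 := by linarith
  rw [gossipWeight, sourceWeight, Nat.cast_sub (by omega : 1 ≤ n), Nat.cast_one]
  field_simp
  ring

end FullyConnected

open FullyConnected

theorem fully_connected_freshness_explicit_solution_general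
    (ρ : ℝ) (hρ : 0 < ρ) (n : ℕ) (hn : 2 ≤ n)
    (G : ℕ → ℝ)
    (hGrec : ∀ j : ℕ, 1 ≤ j → j ≤ n - 1 →
      G j = ((j : ℝ) / n + ((j : ℝ) * ((n : ℝ) - j) / ((n : ℝ) - 1)) * G (j + 1)) /
        (ρ + (j : ℝ) / n + (j : ℝ) * ((n : ℝ) - j) / ((n : ℝ) - 1)))
    (b : ℕ → ℝ)
    (hb : ∀ i : ℕ, 1 ≤ i → i ≤ n - 1 →
      b i = (1 + (n : ℝ) * ρ / i + ((n : ℝ) / ((n : ℝ) - 1)) * ((n : ℝ) - i))⁻¹ *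
        ∏ j ∈ Icc 1 (i - 1),
          (1 + ((n : ℝ) - 1) * ρ / (((n : ℝ) - j) * j) +
            (((n : ℝ) - 1) / n) * (1 / ((n : ℝ) - j)))⁻¹) :
    G 1 = (∑ i ∈ Icc 1 (n - 1), b i) + ((n : ℝ) / ((n : ℝ) - 1)) * b (n - 1) * G n := by
  have hIcc : ∀ i, 1 ≤ i → Icc 1 (i - 1) = Ico 1 i := fun i hi => by ext; simp; omega
  have hrec : ∀ j ∈ Ico 1 n, G j = sourceWeight ρ n j + gossipWeight ρ n j * G (j + 1) := by
    intro j hj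
    rw [mem_Ico] at hj
    rw [hGrec j hj.1 (by omega), sourceWeight, gossipWeight, totalRate]
    ring
  have hb' : ∀ i ∈ Ico 1 n, b i = (∏ j ∈ Ico 1 i, gossipWeight ρ n j) * sourceWeight ρ n i := by
    intro i hi
    rw [mem_Ico] at hi
    rw [hb i hi.1 (by omega), inv_sourceFactor_eq hρ.le hi.1 hi.2, hIcc i hi.1, mul_comm]
    exact congrArg (· * _) (prod_congr rfl fun j hj => by
      rw [mem_Ico] at hj
      exact inv_gossipFactor_eq hρ.le hj.1 (by omega))
  have hlast : ∏ j ∈ Ico 1 n, gossipWeight ρ n j = (n : ℝ) / ((n : ℝ) - 1) * b (n - 1) := by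
    have hsplit := prod_Ico_succ_top (by omega : 1 ≤ n - 1) (gossipWeight ρ n)
    rw [Nat.sub_add_cancel (by omega)] at hsplit
    rw [hsplit, gossipWeight_sub_one hn, hb' (n - 1) (by simp; omega)]
    ring
  rw [eq_sum_prod_of_affine_recurrence (by omega) hrec, hlast, hIcc n (by omega)]
  exact congrArg (· + _) (sum_congr rfl fun i hi => (hb' i hi).symm)

open Finset in
/-- Explicit solution of the fully connected network freshness recursion:
with `G n = 1/(1+ρ)` and
`G j = (j/n + (j(n-j)/(n-1)) G (j+1)) / (ρ + j/n + j(n-j)/(n-1))`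
for `1 ≤ j ≤ n-1`, and
`b i = (1 + nρ/i + (n/(n-1))(n-i))⁻¹ ∏_{j=1}^{i-1} (1 + (n-1)ρ/((n-j)j) + ((n-1)/n)/(n-j))⁻¹`,
one has `G 1 = ∑_{i=1}^{n-1} b i + (n/(n-1)) b (n-1) G n`. -/
theorem fully_connected_freshness_explicit_solution
    (ρ : ℝ) (hρ : 0 < ρ) (n : ℕ) (hn : 2 ≤ n)
    (G : ℕ → ℝ)
    (hGn : G n = 1 / (1 + ρ))
    (hGrec : ∀ j : ℕ, 1 ≤ j → j ≤ n - 1 →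
      G j = ((j : ℝ) / n + ((j : ℝ) * ((n : ℝ) - j) / ((n : ℝ) - 1)) * G (j + 1)) /
        (ρ + (j : ℝ) / n + (j : ℝ) * ((n : ℝ) - j) / ((n : ℝ) - 1)))
    (b : ℕ → ℝ)
    (hb : ∀ i : ℕ, 1 ≤ i → i ≤ n - 1 →
      b i = (1 + (n : ℝ) * ρ / i + ((n : ℝ) / ((n : ℝ) - 1)) * ((n : ℝ) - i))⁻¹ *
        ∏ j ∈ Icc 1 (i - 1),
          (1 + ((n : ℝ) - 1) * ρ / (((n : ℝ) - j) * j) +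
            (((n : ℝ) - 1) / n) * (1 / ((n : ℝ) - j)))⁻¹) :
    G 1 = (∑ i ∈ Icc 1 (n - 1), b i) + ((n : ℝ) / ((n : ℝ) - 1)) * b (n - 1) * G n :=
  fully_connected_freshness_explicit_solution_general ρ hρ n hn G hGrec b hb
end

section
/- Fix a real ρ with 0 < ρ < 1. For each integer n ≥ 2, let G_n(1) denote the single-node freshness in the n-node fully connected network, defined by the backward recursion G_n(n) = 1/(1+ρ) and G_n(j) = (j/n + (j(n−j)/(n−1))·G_n(j+1)) / (ρ + j/n + j(n−j)/(n−1)) for j = 1, …, n−1. Then there exist constants c₂ ≥ c₁ > 0 and an integer N such that c₁·n^{-ρ} ≤ G_n(1) ≤ c₂·n^{-ρ} for all n ≥ N; i.e., the freshness decreases to 0 as n^{-ρ}. -/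
/-!
Put `P(j) = ∏_{1 ≤ i < j} (1 + ρ / i) ≍ j ^ ρ`. For the lower bound, `κ P(j)` is a subsolution of
the backward recursion as long as `κ P(n) (1 + ρ) ≤ 1`, which allows `κ ≍ n ^ (-ρ)`. For the upper
bound, the recursion gives `G(j) / P(j) ≤ G(j+1) / P(j+1) + (n - 1) / (n (n - j) P(j+1))`. Below
`n / 2` the increment is at most `(2 / n) (j + 1) ^ (-ρ)`, which sums to `O(n ^ (-ρ))` because
`ρ < 1`, and at `j = ⌈n / 2⌉` we have `G ≤ 1` and `P ≍ n ^ ρ`.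
-/

open Finset Real

-- `growthFactor ρ j = Γ(j + ρ) / (Γ(j) Γ(1 + ρ))`. The ratio `1 + ρ / j` is what makes
-- `c (1 + ρ / j) = c + ρ (n - j) / (n - 1)` for the coefficient `c = j (n - j) / (n - 1)`.
noncomputable def growthFactor (ρ : ℝ) (j : ℕ) : ℝ := ∏ i ∈ Ico 1 j, (1 + ρ / i)

section growthFactor

variable {ρ : ℝ}

@[simp] lemma growthFactor_one (ρ : ℝ) : growthFactor ρ 1 = 1 := by simp [growthFactor]

lemma growthFactor_succ (ρ : ℝ) {j : ℕ} (hj : 1 ≤ j) :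
    growthFactor ρ (j + 1) = growthFactor ρ j * (1 + ρ / j) :=
  prod_Ico_succ_top hj _

lemma one_le_one_add_div_natCast (hρ : 0 ≤ ρ) (i : ℕ) : 1 ≤ 1 + ρ / i :=
  le_add_of_nonneg_right (by positivity)

lemma growthFactor_pos (hρ : 0 ≤ ρ) (j : ℕ) : 0 < growthFactor ρ j :=
  prod_pos fun i _ ↦ one_pos.trans_le (one_le_one_add_div_natCast hρ i)

lemma growthFactor_mono (hρ : 0 ≤ ρ) : Monotone (growthFactor ρ) := fun _ _ h ↦
  prod_le_prod_of_subset_of_one_le (Ico_subset_Ico_right h)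
    (fun i _ ↦ zero_le_one.trans (one_le_one_add_div_natCast hρ i))
    fun i _ _ ↦ one_le_one_add_div_natCast hρ i

lemma rpow_le_growthFactor (hρ0 : 0 ≤ ρ) (hρ1 : ρ ≤ 1) {j : ℕ} (hj : 1 ≤ j) :
    (j : ℝ) ^ ρ ≤ growthFactor ρ j := by
  induction j, hj using Nat.le_induction with
  | base => simp
  | succ k hk ih =>
    have hk0 : (0 : ℝ) < k := by exact_mod_cast hk
    have bernoulli : (1 + 1 / (k : ℝ)) ^ ρ ≤ 1 + ρ / k := by
      simpa [div_eq_mul_inv] using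
        rpow_one_add_le_one_add_mul_self (by linarith [inv_pos.2 hk0]) hρ0 hρ1
    calc ((k + 1 : ℕ) : ℝ) ^ ρ = (k : ℝ) ^ ρ * (1 + 1 / (k : ℝ)) ^ ρ := by
          rw [← mul_rpow hk0.le (by positivity)]; push_cast; field_simp
      _ ≤ growthFactor ρ k * (1 + ρ / k) := by gcongr; exact (growthFactor_pos hρ0 k).le
      _ = growthFactor ρ (k + 1) := (growthFactor_succ ρ hk).symm

lemma growthFactor_le_exp_mul_rpow (hρ : 0 ≤ ρ) {j : ℕ} (hj : 1 ≤ j) :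
    growthFactor ρ j ≤ exp ρ * (j : ℝ) ^ ρ := by
  have hj0 : (0 : ℝ) < j := by exact_mod_cast hj
  have harmonic_bound : ∑ i ∈ Ico 1 j, (i : ℝ)⁻¹ ≤ 1 + log j := by
    refine le_trans ?_ (harmonic_le_one_add_log j)
    rw [harmonic_eq_sum_Icc]
    push_cast
    exact sum_le_sum_of_subset_of_nonneg Ico_subset_Icc_self fun _ _ _ ↦ by positivity
  calc growthFactor ρ j ≤ ∏ i ∈ Ico 1 j, exp (ρ * (i : ℝ)⁻¹) :=
        prod_le_prod (fun i _ ↦ by positivity) fun i _ ↦ by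
          rw [add_comm, ← div_eq_mul_inv]; exact add_one_le_exp _
    _ = exp (ρ * ∑ i ∈ Ico 1 j, (i : ℝ)⁻¹) := by rw [mul_sum, exp_sum]
    _ ≤ exp (ρ * (1 + log j)) := by gcongr
    _ = exp ρ * (j : ℝ) ^ ρ := by rw [rpow_def_of_pos hj0, ← exp_add]; ring_nf

end growthFactor

lemma one_sub_mul_rpow_neg_le {ρ x : ℝ} (hρ0 : 0 ≤ ρ) (hρ1 : ρ ≤ 1) (hx : 0 ≤ x) :
    (1 - ρ) * (x + 1) ^ (-ρ) ≤ (x + 1) ^ (1 - ρ) - x ^ (1 - ρ) := by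
  have hx1 : 0 < x + 1 := by linarith
  -- Bernoulli with exponent `1 - ρ` at `1 - 1 / (x + 1) = x / (x + 1)`
  have bernoulli := rpow_one_add_le_one_add_mul_self (s := -(x + 1)⁻¹)
    (by rw [neg_le_neg_iff]; exact inv_le_one_of_one_le₀ (by linarith)) (p := 1 - ρ)
    (by linarith) (by linarith)
  have hbase : 1 + -(x + 1)⁻¹ = x * (x + 1)⁻¹ := by field_simp; ring
  rw [hbase, mul_rpow hx (by positivity), inv_rpow hx1.le] at bernoulli
  have hneg : (x + 1) ^ (-ρ) = (x + 1) ^ (1 - ρ) * (x + 1)⁻¹ := by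
    rw [show -ρ = (1 - ρ) - 1 by ring, rpow_sub_one hx1.ne', div_eq_mul_inv]
  rw [hneg]
  field_simp at bernoulli ⊢
  linarith

noncomputable def freshStep (ρ N x g : ℝ) : ℝ :=
  (x / N + x * (N - x) / (N - 1) * g) / (ρ + x / N + x * (N - x) / (N - 1))

section freshStep

variable {ρ N x g : ℝ}

lemma freshStep_le_one (hρ : 0 < ρ) (hx : 0 ≤ x) (hxN : x ≤ N) (hN : 1 < N) (hg : g ≤ 1) :
    freshStep ρ N x g ≤ 1 := by
  have hb : 0 ≤ x / N := by positivity
  have hc : 0 ≤ x * (N - x) / (N - 1) := div_nonneg (mul_nonneg hx (by linarith)) (by linarith)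
  rw [freshStep, div_le_one (by positivity)]
  nlinarith

lemma coeff_mul_one_add_div (hx : x ≠ 0) (hN : N ≠ 1) :
    x * (N - x) / (N - 1) * (1 + ρ / x) = x * (N - x) / (N - 1) + ρ - ρ * ((x - 1) / (N - 1)) := by
  have : N - 1 ≠ 0 := sub_ne_zero.2 hN
  field_simp
  ring

lemma le_freshStep {p : ℝ} (hρ : 0 ≤ ρ) (hx : 1 ≤ x) (hxN : x < N) (hp : 0 ≤ p)
    (hp1 : p * (1 + ρ) ≤ 1) (hg : p * (1 + ρ / x) ≤ g) : p ≤ freshStep ρ N x g := by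
  have hN : 1 < N := by linarith
  have hb : 0 < x / N := by positivity
  have hc : 0 < x * (N - x) / (N - 1) := div_pos (by nlinarith) (by linarith)
  have hfrac : (x - 1) / (N - 1) ≤ x / N := by
    rw [div_le_div_iff₀ (by linarith) (by linarith)]; nlinarith
  have hcg := mul_le_mul_of_nonneg_left hg hc.le
  rw [mul_left_comm, coeff_mul_one_add_div (by linarith) hN.ne'] at hcg
  rw [freshStep, le_div_iff₀ (by positivity)]
  nlinarith [mul_le_mul_of_nonneg_left hfrac (mul_nonneg hp hρ)]

lemma freshStep_mul_le (hρ : 0 ≤ ρ) (hx : 1 ≤ x) (hxN : x < N) (hg : 0 ≤ g) :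
    freshStep ρ N x g * (1 + ρ / x) ≤ g + (N - 1) / (N * (N - x)) := by
  have hN : 1 < N := by linarith
  have hb : 0 < x / N := by positivity
  have hc : 0 < x * (N - x) / (N - 1) := div_pos (by nlinarith) (by linarith)
  have hD : 0 < ρ + x / N + x * (N - x) / (N - 1) := by positivity
  have hcoeff : x * (N - x) / (N - 1) * (1 + ρ / x) ≤ ρ + x / N + x * (N - x) / (N - 1) := by
    rw [coeff_mul_one_add_div (by linarith) hN.ne']
    nlinarith [div_nonneg (by linarith : 0 ≤ x - 1) (by linarith : 0 ≤ N - 1)]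
  have hbc : (N - 1) / (N * (N - x)) = x / N / (x * (N - x) / (N - 1)) := by
    field_simp
  rw [hbc]
  set b := x / N
  set c := x * (N - x) / (N - 1)
  set D := ρ + b + c
  have hstep : freshStep ρ N x g = (b + c * g) / D := rfl
  clear_value b c D
  calc freshStep ρ N x g * (1 + ρ / x) = (b + c * g) * (c * (1 + ρ / x)) / D / c := by
        rw [hstep]; field_simp
    _ ≤ (b + c * g) * D / D / c := by gcongr
    _ = g + b / c := by field_simp; ring

end freshStep

def FreshnessRecursion (ρ : ℝ) (n : ℕ) (g : ℕ → ℝ) : Prop :=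
  ∀ j : ℕ, 1 ≤ j → j < n → g j = freshStep ρ n j (g (j + 1))

namespace FreshnessRecursion

variable {ρ : ℝ} {n : ℕ} {g : ℕ → ℝ}

lemma le_one (hρ : 0 < ρ) (hrec : FreshnessRecursion ρ n g) (hn : g n ≤ 1) {j : ℕ}
    (hj1 : 1 ≤ j) (hjn : j ≤ n) : g j ≤ 1 := by
  refine Nat.decreasingInduction' (fun k hkn hjk ih ↦ ?_) hjn hn
  have hk1 : 1 ≤ k := hj1.trans hjk
  rw [hrec k hk1 hkn]
  exact freshStep_le_one hρ (Nat.cast_nonneg k) (by exact_mod_cast hkn.le)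
    (by exact_mod_cast hk1.trans_lt hkn) ih

lemma mul_growthFactor_le {κ : ℝ} (hρ : 0 ≤ ρ) (hrec : FreshnessRecursion ρ n g) (hκ : 0 ≤ κ)
    (hκn : κ * growthFactor ρ n * (1 + ρ) ≤ 1) (hn : κ * growthFactor ρ n ≤ g n) {j : ℕ}
    (hj1 : 1 ≤ j) (hjn : j ≤ n) : κ * growthFactor ρ j ≤ g j := by
  refine Nat.decreasingInduction' (fun k hkn hjk ih ↦ ?_) hjn hn
  have hk1 : 1 ≤ k := hj1.trans hjk
  rw [hrec k hk1 hkn]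
  refine le_freshStep hρ (by exact_mod_cast hk1) (by exact_mod_cast hkn)
    (mul_nonneg hκ (growthFactor_pos hρ k).le) (le_trans ?_ hκn) ?_
  · gcongr
    exact growthFactor_mono hρ hkn.le
  · rwa [mul_assoc, ← growthFactor_succ ρ hk1]

lemma div_growthFactor_le (hρ : 0 ≤ ρ) (hrec : FreshnessRecursion ρ n g) {k : ℕ} (hk1 : 1 ≤ k)
    (hkn : k < n) (hg : 0 ≤ g (k + 1)) :
    g k / growthFactor ρ k ≤
      g (k + 1) / growthFactor ρ (k + 1) + (n - 1) / (n * (n - k)) / growthFactor ρ (k + 1) := by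
  have hstep := freshStep_mul_le (N := n) (x := k) hρ (by exact_mod_cast hk1)
    (by exact_mod_cast hkn) hg
  rw [← hrec k hk1 hkn] at hstep
  have hP := growthFactor_pos hρ k
  calc g k / growthFactor ρ k = g k * (1 + ρ / k) / (growthFactor ρ k * (1 + ρ / k)) := by
        field_simp
    _ ≤ _ := by
        rw [← add_div, growthFactor_succ ρ hk1]
        gcongr

lemma le_div_growthFactor_add (hρ0 : 0 ≤ ρ) (hρ1 : ρ < 1) (hrec : FreshnessRecursion ρ n g)
    (hg0 : ∀ j, 1 ≤ j → j ≤ n → 0 ≤ g j) {m : ℕ} (hm1 : 1 ≤ m) (hmn : 2 * m ≤ n + 1) :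
    g 1 ≤ g m / growthFactor ρ m + 2 / ((1 - ρ) * n) * (m : ℝ) ^ (1 - ρ) := by
  have h1ρ : 0 < 1 - ρ := by linarith
  set K := 2 / ((1 - ρ) * n)
  have hK : 0 ≤ K := by positivity
  -- the potential `K j ^ (1 - ρ)` absorbs the increments of `g j / growthFactor ρ j`
  let u : ℕ → ℝ := fun j ↦ g j / growthFactor ρ j + K * (j : ℝ) ^ (1 - ρ)
  have hmono : u 1 ≤ u m := by
    refine Nat.decreasingInduction' (fun k hkm hk1 ih ↦ le_trans ?_ ih) hm1 le_rfl
    have hkn : k < n := by omega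
    have hn : (0 : ℝ) < n := Nat.cast_pos.2 (by omega)
    have hk2 : 2 * (k : ℝ) + 1 ≤ n := by exact_mod_cast (by omega : 2 * k + 1 ≤ n)
    have hcoef : (n - 1 : ℝ) / (n * (n - k)) ≤ 2 / n := by
      rw [div_le_div_iff₀ (by nlinarith) hn]; nlinarith
    have hP : 1 / growthFactor ρ (k + 1) ≤ ((k : ℝ) + 1) ^ (-ρ) := by
      have := rpow_le_growthFactor hρ0 hρ1.le (Nat.le_add_left 1 k)
      push_cast at this
      rw [rpow_neg (by positivity), ← one_div]
      gcongr
    have hdecr := one_sub_mul_rpow_neg_le hρ0 hρ1.le (Nat.cast_nonneg k)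
    have hinc : (n - 1 : ℝ) / (n * (n - k)) / growthFactor ρ (k + 1) ≤
        K * (((k : ℝ) + 1) ^ (1 - ρ) - (k : ℝ) ^ (1 - ρ)) :=
      calc (n - 1 : ℝ) / (n * (n - k)) / growthFactor ρ (k + 1)
          = (n - 1 : ℝ) / (n * (n - k)) * (1 / growthFactor ρ (k + 1)) := by ring
        _ ≤ 2 / n * ((k : ℝ) + 1) ^ (-ρ) :=
            mul_le_mul hcoef hP (one_div_pos.2 (growthFactor_pos hρ0 _)).le (by positivity)
        _ = K * ((1 - ρ) * ((k : ℝ) + 1) ^ (-ρ)) := by simp only [K]; field_simp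
        _ ≤ K * (((k : ℝ) + 1) ^ (1 - ρ) - (k : ℝ) ^ (1 - ρ)) := by gcongr
    have := hrec.div_growthFactor_le hρ0 hk1 hkn (hg0 (k + 1) (by omega) (by omega))
    simp only [u]
    push_cast
    linarith
  have hu1 : u 1 = g 1 + K := by simp [u]
  linarith

lemma exp_neg_div_mul_rpow_neg_le (hρ : 0 ≤ ρ) (hn : 1 ≤ n) (hrec : FreshnessRecursion ρ n g)
    (hfix : g n = 1 / (1 + ρ)) : exp (-ρ) / (1 + ρ) * (n : ℝ) ^ (-ρ) ≤ g 1 := by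
  have hn0 : (0 : ℝ) < n := Nat.cast_pos.2 hn
  set κ := exp (-ρ) / (1 + ρ) * (n : ℝ) ^ (-ρ)
  have hκn : κ * growthFactor ρ n * (1 + ρ) ≤ 1 :=
    calc κ * growthFactor ρ n * (1 + ρ) ≤ κ * (exp ρ * (n : ℝ) ^ ρ) * (1 + ρ) := by
          gcongr
          exact growthFactor_le_exp_mul_rpow hρ hn
      _ = exp (-ρ) * exp ρ * ((n : ℝ) ^ (-ρ) * (n : ℝ) ^ ρ) := by simp only [κ]; field_simp
      _ = 1 := by rw [← exp_add, ← rpow_add hn0]; simp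
  have hκn' : κ * growthFactor ρ n ≤ g n := by
    rw [hfix, le_div_iff₀ (by positivity)]; exact hκn
  simpa using hrec.mul_growthFactor_le hρ (by positivity) hκn hκn' le_rfl hn

lemma le_two_add_mul_rpow_neg (hρ0 : 0 < ρ) (hρ1 : ρ < 1) (hn : 1 ≤ n)
    (hrec : FreshnessRecursion ρ n g) (hfix : g n = 1 / (1 + ρ)) :
    g 1 ≤ (2 + 2 / (1 - ρ)) * (n : ℝ) ^ (-ρ) := by
  have hn0 : (0 : ℝ) < n := Nat.cast_pos.2 hn
  have h1ρ : 0 < 1 - ρ := by linarith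
  have hg0 (j : ℕ) (hj1 : 1 ≤ j) (hjn : j ≤ n) : 0 ≤ g j := by
    simpa using hrec.mul_growthFactor_le (κ := 0) hρ0.le le_rfl (by simp)
      (by rw [hfix, zero_mul]; positivity) hj1 hjn
  -- stop the telescoping at `m = ⌈n / 2⌉`, where `g m ≤ 1` and `growthFactor ρ m ≥ (n / 2) ^ ρ`
  set m := n - n / 2
  have hm1 : 1 ≤ m := by omega
  have hm : (m : ℝ) ≤ n := by exact_mod_cast Nat.sub_le n (n / 2)
  have hnm : (n : ℝ) ≤ 2 * m := by exact_mod_cast (by omega : n ≤ 2 * m)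
  have hgm : g m ≤ 1 :=
    hrec.le_one hρ0 (by rw [hfix, div_le_one (by positivity)]; linarith) hm1 (Nat.sub_le n _)
  have hPm : (n : ℝ) ^ ρ ≤ 2 * growthFactor ρ m :=
    calc (n : ℝ) ^ ρ ≤ (2 * m : ℝ) ^ ρ := by gcongr
      _ = (2 : ℝ) ^ ρ * (m : ℝ) ^ ρ := mul_rpow zero_le_two (Nat.cast_nonneg m)
      _ ≤ 2 * growthFactor ρ m := by
          gcongr
          · exact rpow_le_self_of_one_le one_le_two hρ1.le
          · exact rpow_le_growthFactor hρ0.le hρ1.le hm1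
  have hfirst : g m / growthFactor ρ m ≤ 2 * (n : ℝ) ^ (-ρ) := by
    rw [rpow_neg hn0.le, div_le_iff₀ (growthFactor_pos hρ0.le m)]
    calc g m ≤ 1 := hgm
      _ = 2 * ((n : ℝ) ^ ρ)⁻¹ * ((n : ℝ) ^ ρ / 2) := by field_simp
      _ ≤ 2 * ((n : ℝ) ^ ρ)⁻¹ * growthFactor ρ m := by gcongr; linarith
  have hsecond : 2 / ((1 - ρ) * n) * (m : ℝ) ^ (1 - ρ) ≤ 2 / (1 - ρ) * (n : ℝ) ^ (-ρ) :=
    calc 2 / ((1 - ρ) * n) * (m : ℝ) ^ (1 - ρ) ≤ 2 / ((1 - ρ) * n) * (n : ℝ) ^ (1 - ρ) := by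
          gcongr
      _ = 2 / (1 - ρ) * (n : ℝ) ^ (-ρ) := by
          rw [sub_eq_add_neg, rpow_add hn0, rpow_one]; field_simp
  have := hrec.le_div_growthFactor_add hρ0.le hρ1 hg0 hm1 (by omega)
  linarith

end FreshnessRecursion

/-- For `0 < ρ < 1`, the single-node freshness in the fully connected n-node
network decreases to 0 as `n^{-ρ}`: there are constants `c₂ ≥ c₁ > 0` and `N`
with `c₁ n^{-ρ} ≤ G n 1 ≤ c₂ n^{-ρ}` for all `n ≥ N`. -/
theorem fully_connected_freshness_scaling_small_rho
    (ρ : ℝ) (hρ0 : 0 < ρ) (hρ1 : ρ < 1)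
    (G : ℕ → ℕ → ℝ)
    (hGn : ∀ n : ℕ, 2 ≤ n → G n n = 1 / (1 + ρ))
    (hGrec : ∀ n : ℕ, 2 ≤ n → ∀ j : ℕ, 1 ≤ j → j ≤ n - 1 →
      G n j = ((j : ℝ) / n + ((j : ℝ) * ((n : ℝ) - j) / ((n : ℝ) - 1)) * G n (j + 1)) /
        (ρ + (j : ℝ) / n + (j : ℝ) * ((n : ℝ) - j) / ((n : ℝ) - 1))) :
    ∃ c₁ c₂ : ℝ, 0 < c₁ ∧ c₁ ≤ c₂ ∧ ∃ N : ℕ, ∀ n : ℕ, N ≤ n →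
      c₁ * (n : ℝ) ^ (-ρ) ≤ G n 1 ∧ G n 1 ≤ c₂ * (n : ℝ) ^ (-ρ) := by
  refine ⟨exp (-ρ) / (1 + ρ), 2 + 2 / (1 - ρ), by positivity, ?_, 2, fun n hn ↦ ?_⟩
  · have hc₁ : exp (-ρ) / (1 + ρ) ≤ 1 :=
      div_le_one_of_le₀ ((exp_le_one_iff.2 (by linarith)).trans (by linarith)) (by positivity)
    have hc₂ : 0 ≤ 2 / (1 - ρ) := div_nonneg zero_le_two (by linarith)
    linarith
  · have hrec : FreshnessRecursion ρ n (G n) := fun j hj1 hjn ↦ hGrec n hn j hj1 (by omega)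
    exact ⟨hrec.exp_neg_div_mul_rpow_neg_le hρ0.le (by omega) (hGn n hn),
      hrec.le_two_add_mul_rpow_neg hρ0 hρ1 (by omega) (hGn n hn)⟩
end

section
/- Let ρ = 1. For each integer n ≥ 2, let G_n(1) denote the single-node freshness in the n-node fully connected network, defined by the backward recursion G_n(n) = 1/(1+ρ) and G_n(j) = (j/n + (j(n−j)/(n−1))·G_n(j+1)) / (ρ + j/n + j(n−j)/(n−1)) for j = 1, …, n−1. Then there exist constants c₂ ≥ c₁ > 0 and an integer N such that c₁·(log n)/n ≤ G_n(1) ≤ c₂·(log n)/n for all n ≥ N; i.e., the freshness decreases to 0 as (log n)/n. -/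
/-!
The recursion `G(j) = step_j (G(j+1))` is monotone in `G(j+1)`, so a backward comparison
principle applies: a profile that dominates one step of the recursion and the boundary value
`G(n) = 1/2` dominates `G`, and symmetrically from below. With `S_j = ∑_{i=j}^{n-1} 1/i`, the
profiles `j (α + β S_j)` satisfy `S_j = 1/j + S_{j+1}`, which turns the one-step condition
into a linear inequality in the rates. The choice `α = β = 1/n` gives a supersolution and
`α = 0, β = 1/(8n)` a subsolution; at `j = 1` they equal `(1 + H_{n-1})/n` and
`H_{n-1}/(8n)`, and `log n ≤ H_{n-1} ≤ 1 + log n`.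
-/

open Finset

lemma le_of_backward_recursion {α : Type*} [Preorder α] {f : ℕ → α → α} {x y : ℕ → α}
    {m n : ℕ} (hf : ∀ j, m ≤ j → j < n → Monotone (f j))
    (hx : ∀ j, m ≤ j → j < n → x j ≤ f j (x (j + 1)))
    (hy : ∀ j, m ≤ j → j < n → f j (y (j + 1)) ≤ y j)
    (hxy : x n ≤ y n) {j : ℕ} (hmj : m ≤ j) (hjn : j ≤ n) : x j ≤ y j := by
  refine Nat.decreasingInduction' (P := fun k => x k ≤ y k) (fun k hkn hjk ih => ?_) hjn hxy
  have hmk : m ≤ k := hmj.trans hjk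
  exact (hx k hmk hkn).trans ((hf k hmk hkn ih).trans (hy k hmk hkn))

namespace FullyConnectedGossip

variable {n j : ℕ}

noncomputable def inRate (n j : ℕ) : ℝ := (j : ℝ) / n

noncomputable def gossipRate (n j : ℕ) : ℝ := (j : ℝ) * ((n : ℝ) - j) / ((n : ℝ) - 1)

noncomputable def step (n j : ℕ) (x : ℝ) : ℝ :=
  (inRate n j + gossipRate n j * x) / (1 + inRate n j + gossipRate n j)

lemma inRate_nonneg : 0 ≤ inRate n j := by unfold inRate; positivity

lemma inRate_le_one (h : j ≤ n) : inRate n j ≤ 1 :=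
  div_le_one_of_le₀ (by exact_mod_cast h) (Nat.cast_nonneg n)

lemma gossipRate_nonneg (h : j < n) : 0 ≤ gossipRate n j := by
  have : (j : ℝ) < n := by exact_mod_cast h
  have : (1 : ℝ) ≤ n := by exact_mod_cast (by omega : 1 ≤ n)
  unfold gossipRate
  apply div_nonneg <;> nlinarith

lemma gossipRate_le (hj : 1 ≤ j) (h : j < n) : gossipRate n j ≤ j := by
  have : (1 : ℝ) ≤ j := by exact_mod_cast hj
  have : (j : ℝ) + 1 ≤ n := by exact_mod_cast h
  unfold gossipRate
  rw [div_le_iff₀ (by linarith)]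
  nlinarith

lemma mul_one_add_inRate_sub_le_gossipRate (hj : 1 ≤ j) (h : j < n) :
    j * (1 + inRate n j) - 2 * j ^ 2 / n ≤ gossipRate n j := by
  have hjr : (1 : ℝ) ≤ j := by exact_mod_cast hj
  have : (j : ℝ) + 1 ≤ n := by exact_mod_cast h
  have hn : (n : ℝ) ≠ 0 := by linarith
  calc (j : ℝ) * (1 + inRate n j) - 2 * j ^ 2 / n = j * (n - j) / n := by
        unfold inRate; field_simp; ring
    _ ≤ gossipRate n j :=
        div_le_div_of_nonneg_left (by nlinarith) (by linarith) (by linarith)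

lemma step_monotone (h : j < n) : Monotone (step n j) := fun x y hxy =>
  div_le_div_of_nonneg_right
    (add_le_add_right (mul_le_mul_of_nonneg_left hxy (gossipRate_nonneg h)) _)
    (by linarith [inRate_nonneg (n := n) (j := j), gossipRate_nonneg h])

noncomputable def tailHarmonic (n j : ℕ) : ℝ := ∑ i ∈ Ico j n, (i : ℝ)⁻¹

lemma tailHarmonic_nonneg : 0 ≤ tailHarmonic n j := sum_nonneg fun _ _ => by positivity

lemma tailHarmonic_of_lt (h : j < n) :
    tailHarmonic n j = (j : ℝ)⁻¹ + tailHarmonic n (j + 1) :=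
  sum_eq_sum_Ico_succ_bot h _

lemma mul_tailHarmonic_le (hj : 1 ≤ j) : j * tailHarmonic n j ≤ n := by
  have hjr : (0 : ℝ) < j := by exact_mod_cast hj
  calc (j : ℝ) * tailHarmonic n j ≤ j * ∑ _i ∈ Ico j n, (j : ℝ)⁻¹ := by
        gcongr _ * ?_
        refine sum_le_sum fun i hi => ?_
        gcongr
        exact_mod_cast (mem_Ico.mp hi).1
    _ = (n - j : ℕ) := by simp only [sum_const, Nat.card_Ico, nsmul_eq_mul]; field_simp
    _ ≤ n := by exact_mod_cast Nat.sub_le n j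

lemma tailHarmonic_one (n : ℕ) : tailHarmonic n 1 = harmonic (n - 1) := by
  simp [tailHarmonic, harmonic, sum_Ico_eq_sum_range, add_comm]

noncomputable def harmonicProfile (α β : ℝ) (n j : ℕ) : ℝ := j * (α + β * tailHarmonic n j)

lemma harmonicProfile_of_lt (α β : ℝ) (hj : 1 ≤ j) (h : j < n) :
    harmonicProfile α β n j = j * (α + β * tailHarmonic n (j + 1)) + β := by
  have : (j : ℝ) ≠ 0 := by positivity
  rw [harmonicProfile, tailHarmonic_of_lt h]
  field_simp
  ring

lemma harmonicProfile_succ (α β : ℝ) :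
    harmonicProfile α β n (j + 1) = (j + 1) * (α + β * tailHarmonic n (j + 1)) := by
  simp [harmonicProfile]

lemma step_le_iff (h : j < n) (u β : ℝ) :
    step n j ((j + 1) * u) ≤ j * u + β ↔ inRate n j ≤
      (1 + inRate n j + gossipRate n j) * β + (j * (1 + inRate n j) - gossipRate n j) * u := by
  have := inRate_nonneg (n := n) (j := j)
  have := gossipRate_nonneg h
  rw [step, div_le_iff₀ (by linarith)]
  constructor <;> intro <;> linarith

lemma le_step_iff (h : j < n) (u β : ℝ) :
    j * u + β ≤ step n j ((j + 1) * u) ↔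
      (1 + inRate n j + gossipRate n j) * β + (j * (1 + inRate n j) - gossipRate n j) * u ≤
        inRate n j := by
  have := inRate_nonneg (n := n) (j := j)
  have := gossipRate_nonneg h
  rw [step, le_div_iff₀ (by linarith)]
  constructor <;> intro <;> linarith

lemma step_harmonicProfile_le (hj : 1 ≤ j) (h : j < n) :
    step n j (harmonicProfile (1 / n) (1 / n) n (j + 1)) ≤ harmonicProfile (1 / n) (1 / n) n j := by
  have hn : (0 : ℝ) < n := by exact_mod_cast (by omega : 0 < n)
  have hu : 1 / n ≤ 1 / n + 1 / n * tailHarmonic n (j + 1) :=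
    le_add_of_nonneg_right (mul_nonneg (by positivity) tailHarmonic_nonneg)
  have hc : 0 ≤ j * (1 + inRate n j) - gossipRate n j := by
    nlinarith [gossipRate_le hj h, inRate_nonneg (n := n) (j := j)]
  rw [harmonicProfile_succ, harmonicProfile_of_lt _ _ hj h, step_le_iff h]
  calc inRate n j ≤ (1 + inRate n j + gossipRate n j) * (1 / n)
        + (j * (1 + inRate n j) - gossipRate n j) * (1 / n) := by
        have ha : (0 : ℝ) ≤ j / n := by positivity
        rw [← add_mul, ← div_eq_mul_one_div, inRate]
        gcongr
        nlinarith
    _ ≤ _ := by gcongr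

lemma harmonicProfile_le_step (hj : 1 ≤ j) (h : j < n) :
    harmonicProfile 0 (1 / (8 * n)) n j ≤ step n j (harmonicProfile 0 (1 / (8 * n)) n (j + 1)) := by
  have hjr : (1 : ℝ) ≤ j := by exact_mod_cast hj
  have hn : (0 : ℝ) < n := by exact_mod_cast (by omega : 0 < n)
  set S := tailHarmonic n (j + 1)
  have hS : 0 ≤ S := tailHarmonic_nonneg
  have hjS : j * S ≤ n := by
    have := mul_tailHarmonic_le (n := n) (Nat.le_add_left 1 j)
    push_cast at this
    nlinarith
  have hrates : 1 + inRate n j + gossipRate n j ≤ 3 * j := by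
    linarith [inRate_le_one h.le, gossipRate_le hj h]
  have hdrift : (j * (1 + inRate n j) - gossipRate n j) * S ≤ 2 * j :=
    calc (j * (1 + inRate n j) - gossipRate n j) * S ≤ 2 * j ^ 2 / n * S := by
          gcongr
          linarith [mul_one_add_inRate_sub_le_gossipRate hj h]
      _ = 2 * j * (j * S) / n := by ring
      _ ≤ 2 * j * n / n := by gcongr
      _ = 2 * j := by field_simp
  rw [harmonicProfile_succ, harmonicProfile_of_lt _ _ hj h, le_step_iff h]
  calc (1 + inRate n j + gossipRate n j) * (1 / (8 * n))
        + (j * (1 + inRate n j) - gossipRate n j) * (0 + 1 / (8 * n) * S)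
      = (1 + inRate n j + gossipRate n j
          + (j * (1 + inRate n j) - gossipRate n j) * S) / (8 * n) := by ring
    _ ≤ (3 * j + 2 * j) / (8 * n) := by gcongr
    _ ≤ inRate n j := by
      rw [inRate, div_le_div_iff₀ (by positivity) hn]
      nlinarith

lemma log_le_tailHarmonic_one (hn : 1 ≤ n) : Real.log n ≤ tailHarmonic n 1 := by
  have := log_add_one_le_harmonic (n - 1)
  rwa [Nat.sub_add_cancel hn, ← tailHarmonic_one] at this

lemma tailHarmonic_one_le_one_add_log (n : ℕ) : tailHarmonic n 1 ≤ 1 + Real.log n := by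
  rw [tailHarmonic_one]
  refine (harmonic_le_one_add_log (n - 1)).trans ?_
  rcases Nat.eq_zero_or_pos (n - 1) with h | h
  · simp [h, Real.log_natCast_nonneg]
  · gcongr
    omega

variable {x : ℕ → ℝ}

lemma le_harmonicProfile_of_recursion (hxn : x n = 1 / 2)
    (hx : ∀ j, 1 ≤ j → j < n → x j = step n j (x (j + 1))) (hj : 1 ≤ j) (hjn : j ≤ n) :
    x j ≤ harmonicProfile (1 / n) (1 / n) n j := by
  refine le_of_backward_recursion (fun k _ hk => step_monotone hk)
    (fun k hk hkn => (hx k hk hkn).le) (fun k hk hkn => step_harmonicProfile_le hk hkn) ?_ hj hjn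
  have : (n : ℝ) ≠ 0 := by exact_mod_cast (by omega : n ≠ 0)
  simp [hxn, harmonicProfile, tailHarmonic, this]
  norm_num

lemma harmonicProfile_le_of_recursion (hxn : x n = 1 / 2)
    (hx : ∀ j, 1 ≤ j → j < n → x j = step n j (x (j + 1))) (hj : 1 ≤ j) (hjn : j ≤ n) :
    harmonicProfile 0 (1 / (8 * n)) n j ≤ x j :=
  le_of_backward_recursion (fun k _ hk => step_monotone hk)
    (fun k hk hkn => harmonicProfile_le_step hk hkn) (fun k hk hkn => (hx k hk hkn).ge)
    (by simp [hxn, harmonicProfile, tailHarmonic]) hj hjn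

end FullyConnectedGossip

open FullyConnectedGossip in
/-- For `ρ = 1`, the single-node freshness in the fully connected n-node
network decreases to 0 as `(log n)/n`: there are constants `c₂ ≥ c₁ > 0` and
`N` with `c₁ (log n)/n ≤ G n 1 ≤ c₂ (log n)/n` for all `n ≥ N`. -/
theorem fully_connected_freshness_scaling_rho_one
    (ρ : ℝ) (hρ : ρ = 1)
    (G : ℕ → ℕ → ℝ)
    (hGn : ∀ n : ℕ, 2 ≤ n → G n n = 1 / (1 + ρ))
    (hGrec : ∀ n : ℕ, 2 ≤ n → ∀ j : ℕ, 1 ≤ j → j ≤ n - 1 →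
      G n j = ((j : ℝ) / n + ((j : ℝ) * ((n : ℝ) - j) / ((n : ℝ) - 1)) * G n (j + 1)) /
        (ρ + (j : ℝ) / n + (j : ℝ) * ((n : ℝ) - j) / ((n : ℝ) - 1))) :
    ∃ c₁ c₂ : ℝ, 0 < c₁ ∧ c₁ ≤ c₂ ∧ ∃ N : ℕ, ∀ n : ℕ, N ≤ n →
      c₁ * (Real.log n / n) ≤ G n 1 ∧ G n 1 ≤ c₂ * (Real.log n / n) := by
  subst hρ
  refine ⟨1 / 8, 3, by norm_num, by norm_num, 3, fun n hn => ?_⟩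
  have hGnn : G n n = 1 / 2 := by rw [hGn n (by omega)]; norm_num
  have hrec (j : ℕ) (hj : 1 ≤ j) (hjn : j < n) : G n j = step n j (G n (j + 1)) :=
    hGrec n (by omega) j hj (by omega)
  have hlog : 1 ≤ Real.log n := by
    rw [Real.le_log_iff_exp_le (by positivity)]
    calc Real.exp 1 ≤ 3 := (Real.exp_one_lt_d9.trans_le (by norm_num)).le
      _ ≤ n := by exact_mod_cast hn
  constructor
  · calc 1 / 8 * (Real.log n / n) = 1 / (8 * n) * Real.log n := by ring
      _ ≤ 1 / (8 * n) * tailHarmonic n 1 := by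
          gcongr
          exact log_le_tailHarmonic_one (by omega)
      _ = harmonicProfile 0 (1 / (8 * n)) n 1 := by simp [harmonicProfile]
      _ ≤ G n 1 := harmonicProfile_le_of_recursion hGnn hrec le_rfl (by omega)
  · calc G n 1 ≤ harmonicProfile (1 / n) (1 / n) n 1 := le_harmonicProfile_of_recursion hGnn hrec le_rfl (by omega)
      _ = (1 + tailHarmonic n 1) / n := by simp [harmonicProfile]; ring
      _ ≤ (2 + Real.log n) / n := by
          gcongr ?_ / _
          linarith [tailHarmonic_one_le_one_add_log n]
      _ ≤ 3 * (Real.log n / n) := by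
          rw [mul_div_assoc']
          gcongr
          linarith
end

section
/- Fix a real ρ > 1. For each integer n ≥ 2, let G_n(1) denote the single-node freshness in the n-node fully connected network, defined by the backward recursion G_n(n) = 1/(1+ρ) and G_n(j) = (j/n + (j(n−j)/(n−1))·G_n(j+1)) / (ρ + j/n + j(n−j)/(n−1)) for j = 1, …, n−1. Then there exist constants c₂ ≥ c₁ > 0 and an integer N such that c₁/n ≤ G_n(1) ≤ c₂/n for all n ≥ N; i.e., the freshness decreases to 0 as n^{-1}. -/
/-- For `ρ > 1`, the single-node freshness in the fully connected n-node
network decreases to 0 as `n⁻¹`: there are constants `c₂ ≥ c₁ > 0` and `N`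
with `c₁/n ≤ G n 1 ≤ c₂/n` for all `n ≥ N`. -/
theorem fully_connected_freshness_scaling_large_rho
    (ρ : ℝ) (hρ : 1 < ρ)
    (G : ℕ → ℕ → ℝ)
    (hGn : ∀ n : ℕ, 2 ≤ n → G n n = 1 / (1 + ρ))
    (hGrec : ∀ n : ℕ, 2 ≤ n → ∀ j : ℕ, 1 ≤ j → j ≤ n - 1 →
      G n j = ((j : ℝ) / n + ((j : ℝ) * ((n : ℝ) - j) / ((n : ℝ) - 1)) * G n (j + 1)) /
        (ρ + (j : ℝ) / n + (j : ℝ) * ((n : ℝ) - j) / ((n : ℝ) - 1))) :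
    ∃ c₁ c₂ : ℝ, 0 < c₁ ∧ c₁ ≤ c₂ ∧ ∃ N : ℕ, ∀ n : ℕ, N ≤ n →
      c₁ / n ≤ G n 1 ∧ G n 1 ≤ c₂ / n := by
  -- Key auxiliary bound: 0 ≤ G n j ≤ j / ((ρ-1) n)
  have key : ∀ n : ℕ, 2 ≤ n → ∀ d : ℕ, ∀ j : ℕ, 1 ≤ j → j ≤ n → n - j = d →
      0 ≤ G n j ∧ G n j ≤ (j : ℝ) / ((ρ - 1) * n) := by
    intro n hn d
    induction d with
    | zero =>
      intro j hj1 hjn hd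
      have hj : j = n := le_antisymm hjn (Nat.le_of_sub_eq_zero hd)
      have hN : (2:ℝ) ≤ (n:ℝ) := by exact_mod_cast hn
      rw [hj, hGn n hn]
      constructor
      · positivity
      · rw [div_le_div_iff₀ (by linarith) (by nlinarith)]
        nlinarith
    | succ d ih =>
      intro j hj1 hjn hd
      have hjn1 : j ≤ n - 1 := by omega
      have hIH := ih (j+1) (by omega) (by omega) (by omega)
      have hrec := hGrec n hn j hj1 hjn1
      have hN : (2:ℝ) ≤ (n:ℝ) := by exact_mod_cast hn
      have hJ : (1:ℝ) ≤ (j:ℝ) := by exact_mod_cast hj1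
      have hJN : (j:ℝ) + 1 ≤ (n:ℝ) := by
        have : j + 1 ≤ n := by omega
        exact_mod_cast this
      set x := G n (j+1) with hx
      set a : ℝ := (j : ℝ) * ((n : ℝ) - j) / ((n : ℝ) - 1) with ha
      set B : ℝ := (j : ℝ) / ((ρ - 1) * n) with hB
      have hn0 : (0:ℝ) < n := by linarith
      have hpos : (0:ℝ) < (ρ - 1) * n := by nlinarith
      have hB0 : 0 ≤ B := by
        rw [hB]; exact div_nonneg (by linarith) (le_of_lt hpos)
      have ha0 : 0 ≤ a := by
        apply div_nonneg
        · nlinarith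
        · linarith
      have haj : a ≤ (j:ℝ) := by
        rw [ha, div_le_iff₀ (by linarith)]
        nlinarith
      have hden : 0 < ρ + (j:ℝ)/n + a := by
        have : 0 ≤ (j:ℝ)/n := by positivity
        linarith
      rw [hrec]
      have hxu : x ≤ B + 1 / ((ρ - 1) * n) := by
        have h := hIH.2
        push_cast at h
        have : ((j:ℝ) + 1) / ((ρ - 1) * n) = B + 1 / ((ρ - 1) * n) := by
          rw [hB]; ring
        linarith [this ▸ h]
      constructor
      · apply div_nonneg _ (le_of_lt hden)
        have : 0 ≤ (j:ℝ)/n := by positivity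
        nlinarith [hIH.1]
      · rw [div_le_iff₀ hden]
        have h1 : a * x ≤ a * B + a / ((ρ - 1) * n) := by
          have h := mul_le_mul_of_nonneg_left hxu ha0
          have e : a * (B + 1 / ((ρ - 1) * n)) = a * B + a / ((ρ - 1) * n) := by ring
          linarith [e ▸ h]
        have h2 : a / ((ρ - 1) * n) ≤ (j:ℝ) / ((ρ - 1) * n) := by
          gcongr
        have heq : (j:ℝ)/n + (j:ℝ)/((ρ - 1) * n) = B * ρ := by
          rw [hB]
          rw [div_add_div _ _ (ne_of_gt hn0) (ne_of_gt hpos), div_mul_eq_mul_div]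
          rw [div_eq_div_iff (by positivity) (by positivity)]
          ring
        have h3 : 0 ≤ B * ((j:ℝ)/n) := by positivity
        nlinarith [h1, h2, heq, h3]
  refine ⟨1/(ρ+2), 1/(ρ-1), by positivity, by
      rw [div_le_div_iff₀ (by linarith) (by linarith)]; linarith, 2, ?_⟩
  intro n hn
  have hN : (2:ℝ) ≤ (n:ℝ) := by exact_mod_cast hn
  have hn0 : (0:ℝ) < n := by linarith
  have hupper := (key n hn (n-1) 1 le_rfl (by omega) rfl).2
  have hG2 : 0 ≤ G n 2 := (key n hn (n-2) 2 (by omega) hn rfl).1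
  have hrec := hGrec n hn 1 le_rfl (by omega)
  push_cast at hrec
  rw [one_mul, div_self (by linarith : (n:ℝ) - 1 ≠ 0), one_mul] at hrec
  refine ⟨?_, ?_⟩
  · rw [hrec]
    have hden : 0 < ρ + (1:ℝ)/n + 1 := by positivity
    rw [div_le_div_iff₀ hn0 hden]
    have h1n : (1:ℝ)/n ≤ 1 := by
      rw [div_le_one hn0]; linarith
    have key2 : (1/(ρ+2)) * (ρ + 1/(n:ℝ) + 1) ≤ 1 := by
      rw [div_mul_eq_mul_div, one_mul, div_le_one (by linarith)]
      linarith
    have key3 : (1:ℝ) ≤ ((1:ℝ)/n + G n 2) * n := by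
      rw [add_mul, one_div_mul_cancel (ne_of_gt hn0)]
      nlinarith [mul_nonneg hG2 hn0.le]
    linarith
  · calc G n 1 ≤ (1:ℝ) / ((ρ-1)*n) := by simpa using hupper
      _ = 1/(ρ-1)/n := (div_div 1 (ρ-1) (n:ℝ)).symm
end

section
/- Fix a real ρ > 0 and an integer n ≥ 2. Define the fully connected freshness values by G(n) = 1/(1+ρ) and G(j) = (j/n + (j(n−j)/(n−1))·G(j+1)) / (ρ + j/n + j(n−j)/(n−1)) for j = 1, …, n−1. Then G(j) ≥ j/(j + nρ) for every j = 1, …, n; in particular the single-node freshness in the fully connected network is at least the single-node freshness 1/(1 + nρ) of the disconnected network: G(1) ≥ 1/(1 + nρ). -/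
/-!
The bound `j / (j + nρ) = (j/n) / (ρ + j/n)` is what the recursion gives without the gossip
term. With it, `G j` is a mediant of `(j/n) / (ρ + j/n)` and `G (j + 1)`, so `G j` is above
the bound for `j` once `G (j + 1)` is; and by downward induction `G (j + 1)` is above the bound
for `j + 1`, which is larger since `x ↦ x / (x + c)` is increasing. The induction starts from
`G n = 1 / (1 + ρ) = n / (n + nρ)`.
-/

lemma div_le_add_mul_div_add {a c d y : ℝ} (hc : 0 < c) (hd : 0 ≤ d) (h : a / c ≤ y) :
    a / c ≤ (a + d * y) / (c + d) := by
  rw [le_div_iff₀ (by linarith), mul_add, div_mul_cancel₀ a hc.ne']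
  nlinarith

lemma div_add_le_div_add {x y c : ℝ} (hc : 0 ≤ c) (hx : 0 < x) (hxy : x ≤ y) :
    x / (x + c) ≤ y / (y + c) := by
  rw [div_le_div_iff₀ (by linarith) (by linarith)]
  nlinarith

lemma div_add_mul_eq_div_div_add {x n ρ : ℝ} (hn : n ≠ 0) :
    x / (x + n * ρ) = x / n / (ρ + x / n) := by
  rw [show ρ + x / n = (x + n * ρ) / n by field_simp; ring, div_div_div_cancel_right₀ hn]

lemma div_add_mul_le_of_freshness_recursion
    {ρ : ℝ} (hρ : 0 ≤ ρ) {n : ℕ} {G : ℕ → ℝ}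
    (hGn : G n = 1 / (1 + ρ))
    (hGrec : ∀ j : ℕ, 1 ≤ j → j ≤ n - 1 →
      G j = ((j : ℝ) / n + ((j : ℝ) * ((n : ℝ) - j) / ((n : ℝ) - 1)) * G (j + 1)) /
        (ρ + (j : ℝ) / n + (j : ℝ) * ((n : ℝ) - j) / ((n : ℝ) - 1)))
    {j : ℕ} (hj : 1 ≤ j) (hjn : j ≤ n) :
    (j : ℝ) / (j + n * ρ) ≤ G j := by
  have hn : (0 : ℝ) < n := by exact_mod_cast hj.trans hjn
  refine Nat.decreasingInduction' (fun k hkn hjk ih => ?_) hjn ?_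
  · have hk : (1 : ℝ) ≤ k := by exact_mod_cast hj.trans hjk
    have hkn' : (k : ℝ) + 1 ≤ n := by exact_mod_cast hkn
    have hbound : (k : ℝ) / n / (ρ + k / n) ≤ G (k + 1) := by
      rw [← div_add_mul_eq_div_div_add hn.ne']
      refine le_trans ?_ (by exact_mod_cast ih)
      push_cast
      exact div_add_le_div_add (by positivity) (by linarith) (by linarith)
    rw [hGrec k (by omega) (by omega), div_add_mul_eq_div_div_add hn.ne']
    exact div_le_add_mul_div_add (by positivity)
      (div_nonneg (mul_nonneg (by linarith) (by linarith)) (by linarith)) hbound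
  · rw [hGn, ← mul_one_add, div_mul_cancel_left₀ hn.ne', one_div]

/-- The fully connected network freshness dominates the disconnected one:
with `G n = 1/(1+ρ)` and
`G j = (j/n + (j(n-j)/(n-1)) G (j+1)) / (ρ + j/n + j(n-j)/(n-1))` for
`1 ≤ j ≤ n-1`, one has `G j ≥ j/(j + nρ)` for every `j = 1, …, n`; in
particular `G 1 ≥ 1/(1 + nρ)`. -/
theorem fully_connected_freshness_beats_disconnected
    (ρ : ℝ) (hρ : 0 < ρ) (n : ℕ) (hn : 2 ≤ n)
    (G : ℕ → ℝ)
    (hGn : G n = 1 / (1 + ρ))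
    (hGrec : ∀ j : ℕ, 1 ≤ j → j ≤ n - 1 →
      G j = ((j : ℝ) / n + ((j : ℝ) * ((n : ℝ) - j) / ((n : ℝ) - 1)) * G (j + 1)) /
        (ρ + (j : ℝ) / n + (j : ℝ) * ((n : ℝ) - j) / ((n : ℝ) - 1))) :
    (∀ j : ℕ, 1 ≤ j → j ≤ n → G j ≥ (j : ℝ) / ((j : ℝ) + (n : ℝ) * ρ)) ∧
    G 1 ≥ 1 / (1 + (n : ℝ) * ρ) := by
  have hbound (j : ℕ) (hj : 1 ≤ j) (hjn : j ≤ n) : G j ≥ (j : ℝ) / ((j : ℝ) + (n : ℝ) * ρ) :=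
    div_add_mul_le_of_freshness_recursion hρ.le hGn hGrec hj hjn
  exact ⟨hbound, by simpa using hbound 1 le_rfl (by omega)⟩
end

section
/- Fix a real ρ with 0 < ρ < 1. For each integer n ≥ 2, let G_n(1) be the single-node freshness in the n-node fully connected network (defined by G_n(n) = 1/(1+ρ) and G_n(j) = (j/n + (j(n−j)/(n−1))·G_n(j+1)) / (ρ + j/n + j(n−j)/(n−1)) for j = 1, …, n−1), and let F_n(1) be the single-node freshness in the n-node ring network (defined by F_n(n) = 1/(1+ρ) and F_n(j) = (j/n + F_n(j+1)) / (1 + ρ + j/n) for j = 1, …, n−1). Then G_n(1)/F_n(1) → ∞ as n → ∞; i.e., for 0 < ρ < 1 the fully connected network is asymptotically fresher than the ring network. -/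
/-!
Once `j ≥ εn`, a set of `j` nodes of the fully connected network hears the source directly at
rate `j/n ≥ ε`, which keeps `G(j) ≥ ε/(ρ+ε)`. Below `εn` the gossip from the other nodes arrives
at rate `j(n-j)/(n-1) ≥ j(1-ε)`, so each step down loses at most a factor
`j/(j+s) ≥ exp(-s/j)` where `ρ+ε ≤ s(1-ε)`; summing the harmonic series gives
`G(1) ≥ c·exp(-s(1 + log n)) = c·e^(-s)·n^(-s)`, and `ρ < 1` leaves room for `s < 1`.
In the ring the recursion keeps `F(j) ≤ (j/ρ + 1/ρ²)/n`, so `F(1) = O(1/n)` and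
`G(1)/F(1) ≳ n^(1-s) → ∞`.
-/

open Real Finset Filter

namespace GossipFreshness

noncomputable def ringStep (ρ : ℝ) (n j : ℕ) (x : ℝ) : ℝ :=
  ((j : ℝ) / n + x) / (1 + ρ + (j : ℝ) / n)

/-- Rate at which `j` nodes of the fully connected network hear from the other `n - j`. -/
noncomputable def crossRate (n j : ℕ) : ℝ :=
  (j : ℝ) * ((n : ℝ) - j) / ((n : ℝ) - 1)

noncomputable def fullyConnectedStep (ρ : ℝ) (n j : ℕ) (x : ℝ) : ℝ :=
  ((j : ℝ) / n + crossRate n j * x) / (ρ + (j : ℝ) / n + crossRate n j)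

section Ring

variable {ρ : ℝ} {n : ℕ}

lemma ringStep_pos (hρ : 0 < ρ) (j : ℕ) {x : ℝ} (hx : 0 < x) : 0 < ringStep ρ n j x := by
  unfold ringStep
  positivity

lemma ringStep_le (hρ : 0 < ρ) (hn : 0 < n) (j : ℕ) {x : ℝ}
    (hx : x ≤ (((j : ℝ) + 1) / ρ + 1 / ρ ^ 2) / n) :
    ringStep ρ n j x ≤ ((j : ℝ) / ρ + 1 / ρ ^ 2) / n := by
  have hn' : (0 : ℝ) < n := by exact_mod_cast hn
  rw [le_div_iff₀ hn'] at hx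
  have hcoeff : (j : ℝ) + ((j + 1) / ρ + 1 / ρ ^ 2) = (j / ρ + 1 / ρ ^ 2) * (1 + ρ) := by
    field_simp
    ring
  have hextra : 0 ≤ (j / ρ + 1 / ρ ^ 2) * ((j : ℝ) / n) := by positivity
  unfold ringStep
  rw [div_le_div_iff₀ (by positivity) hn']
  calc ((j : ℝ) / n + x) * n = j + x * n := by field_simp
    _ ≤ (j / ρ + 1 / ρ ^ 2) * (1 + ρ) := by linarith
    _ ≤ (j / ρ + 1 / ρ ^ 2) * (1 + ρ + j / n) := by linarith

variable {F : ℕ → ℝ}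

lemma ring_freshness_one_pos (hρ : 0 < ρ) (hn : 1 ≤ n) (hFn : F n = 1 / (1 + ρ))
    (hrec : ∀ j : ℕ, 1 ≤ j → j ≤ n - 1 → F j = ringStep ρ n j (F (j + 1))) : 0 < F 1 :=
  Nat.decreasingInduction' (P := fun j => 0 < F j)
    (fun j hjn hj hpos => by rw [hrec j hj (by omega)]; exact ringStep_pos hρ j hpos) hn
    (hFn ▸ by positivity)

lemma ring_freshness_one_le (hρ : 0 < ρ) (hn : 1 ≤ n) (hFn : F n = 1 / (1 + ρ))
    (hrec : ∀ j : ℕ, 1 ≤ j → j ≤ n - 1 → F j = ringStep ρ n j (F (j + 1))) :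
    F 1 ≤ (1 / ρ + 1 / ρ ^ 2) / n := by
  have hn' : (0 : ℝ) < n := by exact_mod_cast hn
  have hbase : F n ≤ ((n : ℝ) / ρ + 1 / ρ ^ 2) / n :=
    calc F n = 1 / (1 + ρ) := hFn
      _ ≤ 1 / ρ := one_div_le_one_div_of_le hρ (by linarith)
      _ = ((n : ℝ) / ρ) / n := by field_simp
      _ ≤ ((n : ℝ) / ρ + 1 / ρ ^ 2) / n := by
        gcongr
        exact le_add_of_nonneg_right (by positivity)
  simpa using Nat.decreasingInduction' (P := fun j => F j ≤ ((j : ℝ) / ρ + 1 / ρ ^ 2) / n)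
    (fun j hjn hj hle => by
      rw [hrec j hj (by omega)]
      exact ringStep_le hρ (by omega) j (by exact_mod_cast hle)) hn hbase

end Ring

section FullyConnected

variable {ρ : ℝ} {n j : ℕ}

lemma crossRate_nonneg (hn : 1 ≤ n) (hj : j ≤ n) : 0 ≤ crossRate n j := by
  have : (1 : ℝ) ≤ n := by exact_mod_cast hn
  have : (j : ℝ) ≤ n := by exact_mod_cast hj
  unfold crossRate
  apply div_nonneg <;> nlinarith

lemma mul_one_sub_le_crossRate {ε : ℝ} (hn : 2 ≤ n) (hε : ε ≤ 1) (hj : (j : ℝ) < ε * n) :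
    j * (1 - ε) ≤ crossRate n j := by
  have hn' : (2 : ℝ) ≤ n := by exact_mod_cast hn
  have hgap : (1 - ε) * ((n : ℝ) - 1) ≤ n - j := by nlinarith
  unfold crossRate
  rw [le_div_iff₀ (by linarith)]
  nlinarith [Nat.cast_nonneg (α := ℝ) j]

lemma le_fullyConnectedStep_of_le {d x : ℝ} (hρ : 0 < ρ) (hb : 0 ≤ crossRate n j)
    (hd : d * (ρ + j / n) ≤ j / n) (hx : d ≤ x) : d ≤ fullyConnectedStep ρ n j x := by
  unfold fullyConnectedStep
  rw [le_div_iff₀ (by positivity)]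
  nlinarith

lemma mul_le_fullyConnectedStep {x y : ℝ} (hρ : 0 < ρ) (hb : 0 ≤ crossRate n j) (hyx : y ≤ x) :
    crossRate n j / (ρ + j / n + crossRate n j) * y ≤ fullyConnectedStep ρ n j x := by
  unfold fullyConnectedStep
  rw [div_mul_eq_mul_div]
  gcongr
  have : 0 ≤ (j : ℝ) / n := by positivity
  linarith [mul_le_mul_of_nonneg_left hyx hb]

lemma exp_neg_div_le_div_add {k s : ℝ} (hk : 0 < k) (hs : 0 ≤ s) :
    exp (-(s / k)) ≤ k / (k + s) := by
  have h := add_one_le_exp (s / k)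
  rw [exp_neg, show k / (k + s) = (s / k + 1)⁻¹ by field_simp; ring]
  exact inv_anti₀ (by positivity) h

lemma div_add_le_div_add_add {a b k s ε : ℝ} (hρ : 0 < ρ) (hk : 0 < k) (hs : 0 ≤ s)
    (hε : ε < 1) (ha0 : 0 ≤ a) (ha : a ≤ ε) (hb : k * (1 - ε) ≤ b)
    (hsε : ρ + ε ≤ s * (1 - ε)) :
    k / (k + s) ≤ b / (ρ + a + b) := by
  have hb0 : 0 < b := lt_of_lt_of_le (by nlinarith) hb
  rw [div_le_div_iff₀ (by positivity) (by positivity)]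
  nlinarith [mul_le_mul_of_nonneg_left hsε hk.le, mul_le_mul_of_nonneg_left hb hs]

lemma exp_neg_div_le_crossRate_div {ε s : ℝ} (hρ : 0 < ρ) (hn : 2 ≤ n) (hj : 1 ≤ j)
    (hjε : (j : ℝ) < ε * n) (hε : ε < 1) (hs : 0 ≤ s) (hsε : ρ + ε ≤ s * (1 - ε)) :
    exp (-(s / j)) ≤ crossRate n j / (ρ + j / n + crossRate n j) := by
  have hj' : (0 : ℝ) < j := by exact_mod_cast hj
  have hn' : (0 : ℝ) < n := by positivity
  refine (exp_neg_div_le_div_add hj' hs).trans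
    (div_add_le_div_add_add hρ hj' hs hε (by positivity) ?_
      (mul_one_sub_le_crossRate hn hε.le hjε) hsε)
  rw [div_le_iff₀ hn']
  exact hjε.le

lemma sum_Ico_one_inv_le_one_add_log {m n : ℕ} (hmn : m ≤ n + 1) :
    ∑ i ∈ Ico 1 m, (i : ℝ)⁻¹ ≤ 1 + log n :=
  calc ∑ i ∈ Ico 1 m, (i : ℝ)⁻¹ ≤ ∑ i ∈ Icc 1 n, (i : ℝ)⁻¹ :=
        sum_le_sum_of_subset_of_nonneg (fun i hi => by simp at hi ⊢; omega)
          (fun _ _ _ => by positivity)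
    _ = harmonic n := by simp [harmonic_eq_sum_Icc]
    _ ≤ 1 + log n := harmonic_le_one_add_log n

variable {G : ℕ → ℝ}

lemma fullyConnected_freshness_ge_of_le {ε : ℝ} {m : ℕ} (hρ : 0 < ρ) (hn : 2 ≤ n)
    (hε0 : 0 < ε) (hε1 : ε ≤ 1) (hGn : G n = 1 / (1 + ρ))
    (hrec : ∀ j : ℕ, 1 ≤ j → j ≤ n - 1 → G j = fullyConnectedStep ρ n j (G (j + 1)))
    (hm : ε * n ≤ m) (hmn : m ≤ n) : ε / (ρ + ε) ≤ G m := by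
  have hn' : (0 : ℝ) < n := by positivity
  have hm1 : 1 ≤ m := by
    have : (0 : ℝ) < m := lt_of_lt_of_le (by positivity) hm
    exact_mod_cast this
  refine Nat.decreasingInduction' (P := fun j => ε / (ρ + ε) ≤ G j)
    (fun j hjn hmj hle => ?_) hmn ?_
  · have hεj : ε ≤ (j : ℝ) / n := by
      rw [le_div_iff₀ hn']
      exact hm.trans (by exact_mod_cast hmj)
    rw [hrec j (by omega) (by omega)]
    refine le_fullyConnectedStep_of_le hρ (crossRate_nonneg (by omega) hjn.le) ?_ hle
    rw [div_mul_eq_mul_div, div_le_iff₀ (by positivity)]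
    nlinarith
  · rw [hGn, div_le_div_iff₀ (by positivity) (by positivity)]
    nlinarith

lemma fullyConnected_freshness_one_ge_exp {ε s c : ℝ} {m : ℕ} (hρ : 0 < ρ) (hn : 2 ≤ n)
    (hε : ε < 1) (hs : 0 ≤ s) (hsε : ρ + ε ≤ s * (1 - ε))
    (hrec : ∀ j : ℕ, 1 ≤ j → j ≤ n - 1 → G j = fullyConnectedStep ρ n j (G (j + 1)))
    (hm1 : 1 ≤ m) (hmn : m ≤ n) (hm : ∀ k < m, (k : ℝ) < ε * n) (hc0 : 0 ≤ c) (hc : c ≤ G m) :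
    c * exp (-s * ∑ i ∈ Ico 1 m, (i : ℝ)⁻¹) ≤ G 1 := by
  refine Nat.decreasingInduction' (P := fun j => c * exp (-s * ∑ i ∈ Ico j m, (i : ℝ)⁻¹) ≤ G j)
    (fun j hjm hj hle => ?_) hm1 (by simpa using hc)
  set S := ∑ i ∈ Ico (j + 1) m, (i : ℝ)⁻¹
  calc c * exp (-s * ∑ i ∈ Ico j m, (i : ℝ)⁻¹) = exp (-(s / j)) * (c * exp (-s * S)) := by
        rw [sum_eq_sum_Ico_succ_bot hjm, show -s * ((j : ℝ)⁻¹ + S) = -(s / j) + -s * S by ring,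
          exp_add]
        ring
    _ ≤ crossRate n j / (ρ + j / n + crossRate n j) * (c * exp (-s * S)) := by
        gcongr
        exact exp_neg_div_le_crossRate_div hρ hn hj (hm j hjm) hε hs hsε
    _ ≤ G j := by
        rw [hrec j hj (by omega)]
        exact mul_le_fullyConnectedStep hρ (crossRate_nonneg (by omega) (by omega)) hle

lemma fullyConnected_freshness_one_ge {ε s : ℝ} (hρ : 0 < ρ) (hn : 2 ≤ n) (hε0 : 0 < ε)
    (hε1 : ε < 1) (hs : 0 ≤ s) (hsε : ρ + ε ≤ s * (1 - ε)) (hGn : G n = 1 / (1 + ρ))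
    (hrec : ∀ j : ℕ, 1 ≤ j → j ≤ n - 1 → G j = fullyConnectedStep ρ n j (G (j + 1))) :
    ε / (ρ + ε) * exp (-s) * (n : ℝ) ^ (-s) ≤ G 1 := by
  have hn' : (0 : ℝ) < n := by positivity
  set m := ⌈ε * n⌉₊
  have hm1 : 1 ≤ m := Nat.one_le_ceil_iff.mpr (by positivity)
  have hmn : m ≤ n := Nat.ceil_le.mpr (by nlinarith)
  have hGm := fullyConnected_freshness_ge_of_le hρ hn hε0 hε1.le hGn hrec (Nat.le_ceil _) hmn
  calc ε / (ρ + ε) * exp (-s) * (n : ℝ) ^ (-s) = ε / (ρ + ε) * exp (-s * (1 + log n)) := by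
        rw [rpow_def_of_pos hn', mul_assoc, ← exp_add]
        ring_nf
    _ ≤ ε / (ρ + ε) * exp (-s * ∑ i ∈ Ico 1 m, (i : ℝ)⁻¹) := by
        have hH := sum_Ico_one_inv_le_one_add_log (m := m) (n := n) (by omega)
        exact mul_le_mul_of_nonneg_left (exp_le_exp.mpr (by nlinarith)) (by positivity)
    _ ≤ G 1 := fullyConnected_freshness_one_ge_exp hρ hn hε1 hs hsε hrec hm1 hmn
        (fun k hk => Nat.lt_ceil.mp hk) (by positivity) hGm

end FullyConnected

lemma exists_threshold_and_rate_lt_one {ρ : ℝ} (hρ0 : 0 < ρ) (hρ1 : ρ < 1) :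
    ∃ ε s : ℝ, 0 < ε ∧ ε < 1 ∧ 0 ≤ s ∧ s < 1 ∧ ρ + ε ≤ s * (1 - ε) :=
  ⟨(1 - ρ) / 4, (1 + ρ) / 2, by linarith, by linarith, by linarith, by linarith,
    by nlinarith [sq_nonneg (1 - ρ)]⟩

lemma tendsto_div_atTop_of_rpow_le_of_le_div {f g : ℕ → ℝ} {K C s : ℝ} (hK : 0 < K) (hC : 0 < C)
    (hs : s < 1) (hf : ∀ᶠ n : ℕ in atTop, K * (n : ℝ) ^ (-s) ≤ f n)
    (hg : ∀ᶠ n : ℕ in atTop, 0 < g n ∧ g n ≤ C / n) :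
    Tendsto (fun n => f n / g n) atTop atTop := by
  have hlim : Tendsto (fun n : ℕ => K / C * (n : ℝ) ^ (1 - s)) atTop atTop :=
    ((tendsto_rpow_atTop (by linarith)).comp tendsto_natCast_atTop_atTop).const_mul_atTop
      (by positivity)
  refine tendsto_atTop_mono' _ ?_ hlim
  filter_upwards [hf, hg, eventually_gt_atTop 0] with n hfn ⟨hgn0, hgn⟩ hn
  have hn' : (0 : ℝ) < n := by exact_mod_cast hn
  calc K / C * (n : ℝ) ^ (1 - s) = K * (n : ℝ) ^ (-s) / (C / n) := by
        rw [sub_eq_add_neg, rpow_add hn', rpow_one]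
        field_simp
    _ ≤ f n / g n := div_le_div₀ ((by positivity : (0 : ℝ) ≤ _).trans hfn) hfn hgn0 hgn

end GossipFreshness

open GossipFreshness

/-- For `0 < ρ < 1`, the fully connected network is asymptotically fresher
than the ring network: `G n 1 / F n 1 → ∞` as `n → ∞`, where `G n ·` solves
the fully connected recursion and `F n ·` solves the ring recursion. -/
theorem fully_connected_asymptotically_fresher_than_ring
    (ρ : ℝ) (hρ0 : 0 < ρ) (hρ1 : ρ < 1)
    (G : ℕ → ℕ → ℝ)
    (hGn : ∀ n : ℕ, 2 ≤ n → G n n = 1 / (1 + ρ))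
    (hGrec : ∀ n : ℕ, 2 ≤ n → ∀ j : ℕ, 1 ≤ j → j ≤ n - 1 →
      G n j = ((j : ℝ) / n + ((j : ℝ) * ((n : ℝ) - j) / ((n : ℝ) - 1)) * G n (j + 1)) /
        (ρ + (j : ℝ) / n + (j : ℝ) * ((n : ℝ) - j) / ((n : ℝ) - 1)))
    (F : ℕ → ℕ → ℝ)
    (hFn : ∀ n : ℕ, 2 ≤ n → F n n = 1 / (1 + ρ))
    (hFrec : ∀ n : ℕ, 2 ≤ n → ∀ j : ℕ, 1 ≤ j → j ≤ n - 1 →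
      F n j = ((j : ℝ) / n + F n (j + 1)) / (1 + ρ + (j : ℝ) / n)) :
    Filter.Tendsto (fun n : ℕ => G n 1 / F n 1) Filter.atTop Filter.atTop := by
  obtain ⟨ε, s, hε0, hε1, hs0, hs1, hsε⟩ := exists_threshold_and_rate_lt_one hρ0 hρ1
  refine tendsto_div_atTop_of_rpow_le_of_le_div (K := ε / (ρ + ε) * exp (-s))
    (C := 1 / ρ + 1 / ρ ^ 2) (by positivity) (by positivity) hs1 ?_ ?_
  · filter_upwards [eventually_ge_atTop 2] with n hn
    exact fullyConnected_freshness_one_ge hρ0 hn hε0 hε1 hs0 hsε (hGn n hn) (hGrec n hn)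
  · filter_upwards [eventually_ge_atTop 2] with n hn
    exact ⟨ring_freshness_one_pos hρ0 (by omega) (hFn n hn) (hFrec n hn),
      ring_freshness_one_le hρ0 (by omega) (hFn n hn) (hFrec n hn)⟩
end

section
/- Let λ_e, λ_{c1}, λ_{c2}, λ_{d1}, λ_{d2} > 0 be reals. Suppose real numbers F_A, F_B, F_C, F_1 satisfy the system: F_A = (λ_{d1}+λ_{d2})/(λ_e+λ_{d1}+λ_{d2}); F_B = (λ_{d1} + λ_{c2}·F_A)/(λ_e+λ_{d1}+λ_{c2}); F_C = (λ_{d2} + λ_{c1}·F_A)/(λ_e+λ_{d2}+λ_{c1}); F_1 = (λ_{c1}·F_B + λ_{c2}·F_C)/(λ_e+λ_{c1}+λ_{c2}). Then F_1 = (λ_{d1}+λ_{d2})(λ_{c1}+λ_{c2}) / ((λ_e+λ_{d1}+λ_{d2})(λ_e+λ_{c1}+λ_{c2})) − [λ_e / ((λ_e+λ_{d1}+λ_{d2})(λ_e+λ_{c1}+λ_{c2}))] · (λ_{c2}λ_{d1}/(λ_e+λ_{c1}+λ_{d2}) + λ_{c1}λ_{d2}/(λ_e+λ_{c2}+λ_{d1})).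 -/
/-- Closed-form freshness of the user in the parallel-cache network: if
`F_A, F_B, F_C, F_1` solve the freshness system for the sets `{1,C1,C2}`,
`{1,C1}`, `{1,C2}` and node `1`, then `F_1` equals the expression in
equation (8) of the paper. -/
theorem parallel_cache_freshness
    (lam_e lam_c1 lam_c2 lam_d1 lam_d2 : ℝ)
    (he : 0 < lam_e) (hc1 : 0 < lam_c1) (hc2 : 0 < lam_c2)
    (hd1 : 0 < lam_d1) (hd2 : 0 < lam_d2)
    (F_A F_B F_C F_1 : ℝ)
    (hA : F_A = (lam_d1 + lam_d2) / (lam_e + lam_d1 + lam_d2))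
    (hB : F_B = (lam_d1 + lam_c2 * F_A) / (lam_e + lam_d1 + lam_c2))
    (hC : F_C = (lam_d2 + lam_c1 * F_A) / (lam_e + lam_d2 + lam_c1))
    (h1 : F_1 = (lam_c1 * F_B + lam_c2 * F_C) / (lam_e + lam_c1 + lam_c2)) :
    F_1 = (lam_d1 + lam_d2) * (lam_c1 + lam_c2) /
        ((lam_e + lam_d1 + lam_d2) * (lam_e + lam_c1 + lam_c2)) -
      lam_e / ((lam_e + lam_d1 + lam_d2) * (lam_e + lam_c1 + lam_c2)) *
        (lam_c2 * lam_d1 / (lam_e + lam_c1 + lam_d2) +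
          lam_c1 * lam_d2 / (lam_e + lam_c2 + lam_d1)) := by
  subst hA hB hC h1
  have h1 : (0:ℝ) < lam_e + lam_d1 + lam_d2 := by linarith
  have h2 : (0:ℝ) < lam_e + lam_d1 + lam_c2 := by linarith
  have h3 : (0:ℝ) < lam_e + lam_d2 + lam_c1 := by linarith
  have h4 : (0:ℝ) < lam_e + lam_c1 + lam_c2 := by linarith
  have h5 : (0:ℝ) < lam_e + lam_c1 + lam_d2 := by linarith
  have h6 : (0:ℝ) < lam_e + lam_c2 + lam_d1 := by linarith
  field_simp
  ring
end
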